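/- arXiv:1407.6551 — 7 statements merged into one kernel-verified Lean document; each statement's English description precedes it below -/
import Mathlib

section
/- Let θ be a solution of the Kuramoto system of identical oscillators and suppose z(t) ≠ 0 at some time t. Then R is differentiable at t and Ṙ(t) = R(t) · (1/N)∑_{j=1}^N sin²(θ_j(t) − φ(t)). -/
open Filter Real Complex

/-!
Write `z = R e^{iφ}`. The coupling term of oscillator `i` is the mean-field force
`-R sin (θ_i - φ)`, and for arbitrary phase velocities `ω_j` the modulus of the order parameter
moves with `Ṙ = Re (z̄ ż) / R = -(1/N) ∑_j ω_j sin (θ_j - φ)`. Substituting `ω_j = -R sin (θ_j - φ)`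
gives `Ṙ = R (1/N) ∑_j sin² (θ_j - φ)`.
-/

open ComplexConjugate
open scoped RealInnerProductSpace

theorem HasDerivAt.norm {F : Type*} [NormedAddCommGroup F] [InnerProductSpace ℝ F]
    {f : ℝ → F} {f' : F} {x : ℝ} (hf : HasDerivAt f f' x) (h0 : f x ≠ 0) :
    HasDerivAt (‖f ·‖) (⟪f x, f'⟫ / ‖f x‖) x := by
  have h := hf.norm_sq.sqrt (pow_ne_zero 2 (norm_ne_zero_iff.2 h0))
  simp only [Real.sqrt_sq (norm_nonneg _)] at h
  convert h using 1
  field_simp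

theorem Complex.im_conj_mul_exp_I_mul (z : ℂ) (x : ℝ) :
    (conj z * Complex.exp (I * x)).im = ‖z‖ * Real.sin (x - arg z) := by
  rw [mul_comm I, Complex.mul_im, Complex.exp_ofReal_mul_I_re, Complex.exp_ofReal_mul_I_im,
    Real.sin_sub, conj_re, conj_im, ← norm_mul_cos_arg z, ← norm_mul_sin_arg z]
  ring

namespace Kuramoto

noncomputable def orderParameter {N : ℕ} (θ : Fin N → ℝ) : ℂ :=
  ((1 / N : ℝ) : ℂ) * ∑ j : Fin N, Complex.exp (I * θ j)

theorem im_conj_orderParameter_mul_exp {N : ℕ} (θ : Fin N → ℝ) (i : Fin N) :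
    (conj (orderParameter θ) * Complex.exp (I * θ i)).im
      = (1 / (N:ℝ)) * ∑ j : Fin N, Real.sin (θ i - θ j) := by
  simp only [orderParameter, map_mul, map_sum, Complex.conj_ofReal, ← Complex.exp_conj,
    Complex.conj_I, mul_assoc, Finset.sum_mul, ← Complex.exp_add]
  rw [Complex.im_ofReal_mul, Complex.im_sum]
  congr 1
  refine Finset.sum_congr rfl fun j _ => ?_
  rw [show -I * θ j + I * θ i = ((θ i - θ j : ℝ) : ℂ) * I by push_cast; ring,
    Complex.exp_ofReal_mul_I_im]

theorem coupling_eq_neg_norm_mul_sin {N : ℕ} (θ : Fin N → ℝ) (i : Fin N) :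
    -(1 / (N:ℝ)) * ∑ j : Fin N, Real.sin (θ i - θ j)
      = -‖orderParameter θ‖ * Real.sin (θ i - arg (orderParameter θ)) := by
  rw [neg_mul, neg_mul, ← im_conj_orderParameter_mul_exp, Complex.im_conj_mul_exp_I_mul]

section Dynamics

variable {N : ℕ} {θ : Fin N → ℝ → ℝ} {ω : Fin N → ℝ} {t : ℝ}

theorem hasDerivAt_orderParameter (h : ∀ j, HasDerivAt (θ j) (ω j) t) :
    HasDerivAt (fun s => orderParameter (θ · s))
      (((1 / N : ℝ) : ℂ) * ∑ j : Fin N, I * ω j * Complex.exp (I * θ j t)) t := by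
  have hexp : ∀ j, HasDerivAt (fun s => Complex.exp (I * θ j s))
      (I * ω j * Complex.exp (I * θ j t)) t := fun j => by
    simpa [mul_comm] using (((h j).ofReal_comp).const_mul I).cexp
  simpa only [orderParameter, Finset.sum_apply] using
    (HasDerivAt.sum fun j _ => hexp j).const_mul ((1 / N : ℝ) : ℂ)

theorem hasDerivAt_norm_orderParameter (h : ∀ j, HasDerivAt (θ j) (ω j) t)
    (h0 : orderParameter (θ · t) ≠ 0) :
    HasDerivAt (fun s => ‖orderParameter (θ · s)‖)
      (-(1 / (N:ℝ)) * ∑ j : Fin N, ω j * Real.sin (θ j t - arg (orderParameter (θ · t)))) t := by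
  convert (hasDerivAt_orderParameter h).norm h0 using 1
  set z := orderParameter (θ · t)
  have hterm : ∀ j, (I * ω j * Complex.exp (I * θ j t) * conj z).re
      = -(‖z‖ * (ω j * Real.sin (θ j t - arg z))) := fun j => by
    rw [mul_left_comm, ← Complex.im_conj_mul_exp_I_mul,
      show I * ω j * Complex.exp (I * θ j t) * conj z
        = I * (ω j * (conj z * Complex.exp (I * θ j t))) by ring,
      Complex.I_mul_re, Complex.im_ofReal_mul]
  rw [Complex.inner, mul_assoc, Finset.sum_mul, Complex.re_ofReal_mul, Complex.re_sum]
  simp only [hterm, Finset.sum_neg_distrib, ← Finset.mul_sum]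
  field_simp [norm_ne_zero_iff.2 h0]

end Dynamics

end Kuramoto

theorem kuramoto_R_derivative_general (N : ℕ) (θ : Fin N → ℝ → ℝ)
    (hode : ∀ i, ∀ t ≥ (0:ℝ),
      HasDerivAt (θ i) (-(1 / (N:ℝ)) * ∑ j : Fin N, Real.sin (θ i t - θ j t)) t)
    (z : ℝ → ℂ)
    (hz : ∀ t, z t = (1 / (N:ℝ)) * ∑ j : Fin N, Complex.exp (Complex.I * (θ j t : ℂ)))
    (t : ℝ) (ht : 0 ≤ t) (hzt : z t ≠ 0) :
    HasDerivAt (fun s => ‖z s‖)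
      (‖z t‖ *
        ((1 / (N:ℝ)) * ∑ j : Fin N, (Real.sin (θ j t - (z t).arg))^2)) t := by
  obtain rfl : z = fun s => Kuramoto.orderParameter (θ · s) := funext fun s => by
    rw [hz, Kuramoto.orderParameter]; push_cast; rfl
  convert Kuramoto.hasDerivAt_norm_orderParameter (fun j => hode j t ht) hzt using 1
  simp only [Kuramoto.coupling_eq_neg_norm_mul_sin (θ · t), Finset.mul_sum]
  exact Finset.sum_congr rfl fun j _ => by ring

/-- For a solution of the Kuramoto system of identical oscillators, with order parameters
`z(t) = (1/N) ∑_j e^{iθ_j(t)}`, `R(t) = |z(t)|`, `φ(t) = arg z(t)`: if `z(t) ≠ 0` then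
`R` is differentiable at `t` with `Ṙ(t) = R(t) · (1/N) ∑_j sin²(θ_j(t) - φ(t))`. -/
theorem kuramoto_R_derivative (N : ℕ) (hN : 0 < N) (θ : Fin N → ℝ → ℝ)
    (hode : ∀ i, ∀ t ≥ (0:ℝ),
      HasDerivAt (θ i) (-(1 / (N:ℝ)) * ∑ j : Fin N, Real.sin (θ i t - θ j t)) t)
    (z : ℝ → ℂ)
    (hz : ∀ t, z t = (1 / (N:ℝ)) * ∑ j : Fin N, Complex.exp (Complex.I * (θ j t : ℂ)))
    (t : ℝ) (ht : 0 ≤ t) (hzt : z t ≠ 0) :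
    HasDerivAt (fun s => ‖z s‖)
      (‖z t‖ *
        ((1 / (N:ℝ)) * ∑ j : Fin N, (Real.sin (θ j t - (z t).arg))^2)) t :=
  kuramoto_R_derivative_general N θ hode z hz t ht hzt
end

section
/- A constant configuration θ* = (θ*_1,…,θ*_N) ∈ ℝ^N is a stationary solution of the Kuramoto system of identical oscillators (i.e. ∑_{j=1}^N sin(θ*_i − θ*_j) = 0 for every i) if and only if one of the following holds: (1) ∑_{j=1}^N e^{iθ*_j} = 0; or (2) θ* is of type (N−k,k): there exist φ* ∈ ℝ and a subset I ⊆ {1,…,N} with |I| > N/2 such that θ*_i ≡ φ* (mod 2π) for all i ∈ I and θ*_i ≡ φ* + π (mod 2π) for all i ∉ I. -/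
/-!
Write `z = ∑ⱼ e^{iθⱼ} = ‖z‖ e^{iφ}` with `φ = arg z`. Then
`∑ⱼ sin (θᵢ - θⱼ) = ‖z‖ sin (θᵢ - φ)`, so `θ` is stationary iff `z = 0` or every `θᵢ` lies in
`φ + πℤ`. In the latter case, with `I` the oscillators in `φ + 2πℤ`, we get
`z = (|I| - |Iᶜ|) e^{iφ}`; comparing with `z = ‖z‖ e^{iφ}` gives `|I| - |Iᶜ| = ‖z‖ > 0`.
-/

open Real Finset

section Kuramoto

variable {ι : Type*} [Fintype ι]

lemma sum_sin_sub_eq_norm_mul_sin_sub_arg (θ : ι → ℝ) (i : ι) :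
    ∑ j, sin (θ i - θ j) =
      ‖∑ j, Complex.exp (Complex.I * θ j)‖ *
        sin (θ i - Complex.arg (∑ j, Complex.exp (Complex.I * θ j))) := by
  set z := ∑ j, Complex.exp (Complex.I * θ j)
  have hre : z.re = ∑ j, cos (θ j) := by
    simp only [z, Complex.re_sum, mul_comm Complex.I, Complex.exp_ofReal_mul_I_re]
  have him : z.im = ∑ j, sin (θ j) := by
    simp only [z, Complex.im_sum, mul_comm Complex.I, Complex.exp_ofReal_mul_I_im]
  calc ∑ j, sin (θ i - θ j)
      = sin (θ i) * z.re - cos (θ i) * z.im := by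
        simp only [hre, him, mul_sum, ← sum_sub_distrib, sin_sub]
    _ = ‖z‖ * sin (θ i - z.arg) := by
        rw [← Complex.norm_mul_cos_arg, ← Complex.norm_mul_sin_arg, sin_sub]
        ring

lemma sin_sub_eq_zero_iff (x φ : ℝ) :
    sin (x - φ) = 0 ↔ (∃ m : ℤ, x = φ + 2 * π * m) ∨ ∃ m : ℤ, x = φ + π + 2 * π * m := by
  rw [sin_eq_zero_iff]
  constructor
  · rintro ⟨k, hk⟩
    rcases Int.even_or_odd' k with ⟨m, rfl | rfl⟩
    · exact Or.inl ⟨m, by push_cast at hk; linarith⟩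
    · exact Or.inr ⟨m, by push_cast at hk; linarith⟩
  · rintro (⟨m, rfl⟩ | ⟨m, rfl⟩)
    · exact ⟨2 * m, by push_cast; ring⟩
    · exact ⟨2 * m + 1, by push_cast; ring⟩

lemma cexp_I_mul_add_two_pi_mul (φ : ℝ) (m : ℤ) :
    Complex.exp (Complex.I * ↑(φ + 2 * π * m)) = Complex.exp (Complex.I * φ) := by
  rw [← mul_one (Complex.exp (Complex.I * φ)), ← Complex.exp_int_mul_two_pi_mul_I m,
    ← Complex.exp_add]
  congr 1
  push_cast
  ring

lemma cexp_I_mul_add_pi_add_two_pi_mul (φ : ℝ) (m : ℤ) :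
    Complex.exp (Complex.I * ↑(φ + π + 2 * π * m)) = -Complex.exp (Complex.I * φ) := by
  rw [add_right_comm, Complex.ofReal_add, mul_add, Complex.exp_add, cexp_I_mul_add_two_pi_mul,
    mul_comm Complex.I (π : ℂ), Complex.exp_pi_mul_I, mul_neg_one]

lemma sum_cexp_I_mul_of_two_clusters [DecidableEq ι] {θ : ι → ℝ} {φ : ℝ} {I : Finset ι}
    (hI : ∀ i ∈ I, ∃ m : ℤ, θ i = φ + 2 * π * m)
    (hIc : ∀ i ∉ I, ∃ m : ℤ, θ i = φ + π + 2 * π * m) :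
    ∑ j, Complex.exp (Complex.I * θ j) = ((#I : ℂ) - #Iᶜ) * Complex.exp (Complex.I * φ) := by
  have hin : ∀ i ∈ I, Complex.exp (Complex.I * θ i) = Complex.exp (Complex.I * φ) := by
    intro i hi
    obtain ⟨m, hm⟩ := hI i hi
    rw [hm, cexp_I_mul_add_two_pi_mul]
  have hout : ∀ i ∈ Iᶜ, Complex.exp (Complex.I * θ i) = -Complex.exp (Complex.I * φ) := by
    intro i hi
    obtain ⟨m, hm⟩ := hIc i (mem_compl.mp hi)
    rw [hm, cexp_I_mul_add_pi_add_two_pi_mul]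
  rw [← sum_add_sum_compl I, sum_congr rfl hin, sum_congr rfl hout, sum_const, sum_const,
    nsmul_eq_mul, nsmul_eq_mul]
  ring

lemma card_compl_lt_card_of_two_clusters_around_arg [DecidableEq ι] {θ : ι → ℝ} {I : Finset ι}
    (hz : ∑ j, Complex.exp (Complex.I * θ j) ≠ 0)
    (hI : ∀ i ∈ I, ∃ m : ℤ,
      θ i = Complex.arg (∑ j, Complex.exp (Complex.I * θ j)) + 2 * π * m)
    (hIc : ∀ i ∉ I, ∃ m : ℤ,
      θ i = Complex.arg (∑ j, Complex.exp (Complex.I * θ j)) + π + 2 * π * m) :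
    #Iᶜ < #I := by
  set z := ∑ j, Complex.exp (Complex.I * θ j)
  have hcoeff : ((#I : ℂ) - #Iᶜ) = ‖z‖ := by
    refine mul_right_cancel₀ (Complex.exp_ne_zero (Complex.I * z.arg)) ?_
    rw [← sum_cexp_I_mul_of_two_clusters hI hIc, mul_comm Complex.I,
      Complex.norm_mul_exp_arg_mul_I]
  have hcoeff' : (#I : ℝ) - #Iᶜ = ‖z‖ := by exact_mod_cast hcoeff
  have hpos : 0 < ‖z‖ := norm_pos_iff.mpr hz
  exact_mod_cast (by linarith : (#Iᶜ : ℝ) < #I)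

end Kuramoto

theorem kuramoto_stationary_characterization_general (N : ℕ) (θ : Fin N → ℝ) :
    (∀ i, ∑ j : Fin N, Real.sin (θ i - θ j) = 0) ↔
      ((∑ j : Fin N, Complex.exp (Complex.I * (θ j : ℂ)) = 0) ∨
       (∃ (φ : ℝ) (I : Finset (Fin N)), 2 * I.card > N ∧
          (∀ i ∈ I, ∃ m : ℤ, θ i = φ + 2 * π * m) ∧
          (∀ i ∉ I, ∃ m : ℤ, θ i = φ + π + 2 * π * m))) := by
  classical
  set z := ∑ j, Complex.exp (Complex.I * θ j)
  have hsum : ∀ i, ∑ j, sin (θ i - θ j) = ‖z‖ * sin (θ i - z.arg) :=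
    sum_sin_sub_eq_norm_mul_sin_sub_arg θ
  constructor
  · intro hstat
    by_cases hz : z = 0
    · exact Or.inl hz
    have hsin : ∀ i, sin (θ i - z.arg) = 0 := fun i =>
      (mul_eq_zero.mp ((hsum i).symm.trans (hstat i))).resolve_left (norm_ne_zero_iff.mpr hz)
    set I := univ.filter fun i => ∃ m : ℤ, θ i = z.arg + 2 * π * m
    have hI : ∀ i ∈ I, ∃ m : ℤ, θ i = z.arg + 2 * π * m := fun i hi => (mem_filter.mp hi).2
    have hIc : ∀ i ∉ I, ∃ m : ℤ, θ i = z.arg + π + 2 * π * m := fun i hi =>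
      ((sin_sub_eq_zero_iff _ _).mp (hsin i)).resolve_left fun h => hi (by simpa [I] using h)
    have hlt := card_compl_lt_card_of_two_clusters_around_arg hz hI hIc
    have hcard : #I + #Iᶜ = N := by simp [card_add_card_compl]
    exact Or.inr ⟨z.arg, I, by omega, hI, hIc⟩
  · rintro (hz | ⟨φ, I, -, hI, hIc⟩) i
    · rw [hsum, hz, norm_zero, zero_mul]
    have hφ : ∀ k, sin (θ k - φ) = 0 := fun k => (sin_sub_eq_zero_iff _ _).mpr <| by
      by_cases hk : k ∈ I
      exacts [Or.inl (hI k hk), Or.inr (hIc k hk)]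
    refine sum_eq_zero fun j _ => ?_
    rw [show θ i - θ j = (θ i - φ) - (θ j - φ) by ring, sin_sub, hφ, hφ]
    ring

/-- Characterization of stationary solutions of the Kuramoto system of identical
oscillators: `θ*` is stationary (`∑_j sin(θ*_i - θ*_j) = 0` for every `i`) iff either
the order parameter vanishes (`∑_j e^{iθ*_j} = 0`), or `θ*` is of type `(N-k,k)`:
there is `φ*` and a set `I` of indices with `|I| > N/2` such that `θ*_i ≡ φ*` (mod 2π)
on `I` and `θ*_i ≡ φ* + π` (mod 2π) off `I`. -/
theorem kuramoto_stationary_characterization (N : ℕ) (hN : 0 < N) (θ : Fin N → ℝ) :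
    (∀ i, ∑ j : Fin N, Real.sin (θ i - θ j) = 0) ↔
      ((∑ j : Fin N, Complex.exp (Complex.I * (θ j : ℂ)) = 0) ∨
       (∃ (φ : ℝ) (I : Finset (Fin N)), 2 * I.card > N ∧
          (∀ i ∈ I, ∃ m : ℤ, θ i = φ + 2 * π * m) ∧
          (∀ i ∉ I, ∃ m : ℤ, θ i = φ + π + 2 * π * m))) :=
  kuramoto_stationary_characterization_general N θ
end

section
/- Let θ be a solution of the Kuramoto system of identical oscillators which is not a stationary (constant) solution. Then: (1) z(t) ≠ 0 for all t > 0 (so φ(t) is well defined for all t > 0); (2) Ṙ(t) > 0 for all t > 0; and (3) R(t) converges, as t → ∞, to a limit R* ∈ (0,1]. -/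
open Filter Real

/-! The Kuramoto system is the gradient ascent of `(N/2)‖z‖²`: the `i`-th component of the
vector field is `Re (I e^{iθᵢ} z̄)`, so along a solution `d/dt ‖z‖² = (2/N) ∑ θ̇ᵢ²`. The vector
field is Lipschitz, so by uniqueness a solution that sits at an equilibrium at some time `t₀ > 0`
is constant. Hence for a non-stationary solution `‖z‖²` has positive derivative at every `t > 0`:
`‖z‖` is strictly increasing on `[0, ∞)`, nonzero and differentiable with positive derivative for
`t > 0`, and, being bounded by `1`, converges to a limit in `(0, 1]`. -/

theorem ODE_solution_eqOn_Ici_of_equilibrium {E : Type*} [NormedAddCommGroup E] [NormedSpace ℝ E]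
    {v : E → E} {K : NNReal} (hv : LipschitzWith K v) {f : ℝ → E} {a t₀ : ℝ}
    (hf : ∀ t ≥ a, HasDerivAt f (v (f t)) t) (ht₀ : a < t₀) (hv₀ : v (f t₀) = 0) :
    Set.EqOn f (fun _ => f t₀) (Set.Ici a) := by
  intro t ht
  have hconst (s : ℝ) : HasDerivAt (fun _ => f t₀) (v (f t₀)) s := hv₀ ▸ hasDerivAt_const s (f t₀)
  have hb : t₀ < max t t₀ + 1 := by linarith [le_max_right t t₀]
  refine ODE_solution_unique_of_mem_Icc (v := fun _ => v) (s := fun _ => Set.univ)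
    (fun _ _ => hv.lipschitzOnWith) ⟨ht₀, hb⟩
    (HasDerivAt.continuousOn fun s hs => hf s hs.1) (fun s hs => hf s hs.1.le) (fun _ _ => trivial)
    continuousOn_const (fun s _ => hconst s) (fun _ _ => trivial) rfl
    ⟨ht, by linarith [le_max_left t t₀]⟩

theorem MonotoneOn.exists_tendsto_atTop {f : ℝ → ℝ} {a : ℝ} (hf : MonotoneOn f (Set.Ici a))
    (hb : BddAbove (f '' Set.Ici a)) : ∃ l, Tendsto f atTop (nhds l) := by
  have hg : Monotone fun t => f (max a t) := fun s t hst =>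
    hf (le_max_left a s) (le_max_left a t) (max_le_max le_rfl hst)
  have hgb : BddAbove (Set.range fun t => f (max a t)) :=
    hb.mono (Set.range_subset_iff.2 fun t => Set.mem_image_of_mem f (le_max_left a t))
  refine ⟨_, (tendsto_atTop_ciSup hg hgb).congr' ?_⟩
  filter_upwards [eventually_ge_atTop a] with t ht
  rw [max_eq_right ht]

namespace Kuramoto

open Complex Finset ComplexConjugate

variable {N : ℕ}

noncomputable def field (x : Fin N → ℝ) (i : Fin N) : ℝ :=
  -(1 / (N:ℝ)) * ∑ j : Fin N, Real.sin (x i - x j)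

noncomputable def orderParam (x : Fin N → ℝ) : ℂ :=
  (1 / (N:ℝ)) * ∑ j : Fin N, Complex.exp (Complex.I * (x j : ℂ))

theorem lipschitzWith_field : LipschitzWith 2 (field (N := N)) := by
  refine LipschitzWith.of_dist_le_mul fun x y => (dist_pi_le_iff (by positivity)).2 fun i => ?_
  have hN : (0:ℝ) < N := Nat.cast_pos.2 i.pos
  have hterm (j : Fin N) : |Real.sin (x i - x j) - Real.sin (y i - y j)| ≤ 2 * dist x y := calc
    _ ≤ |(x i - y i) - (x j - y j)| := by
      convert Real.abs_sin_sub_sin_le _ _ using 2; ring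
    _ ≤ |x i - y i| + |x j - y j| := abs_sub _ _
    _ ≤ dist x y + dist x y := add_le_add (dist_le_pi_dist x y i) (dist_le_pi_dist x y j)
    _ = 2 * dist x y := by ring
  calc dist (field x i) (field y i)
      = 1 / N * |∑ j, (Real.sin (x i - x j) - Real.sin (y i - y j))| := by
        rw [Real.dist_eq, field, field, ← mul_sub, abs_mul, abs_neg, abs_of_pos (by positivity),
          sum_sub_distrib]
    _ ≤ 1 / N * ∑ _j : Fin N, 2 * dist x y := by
        gcongr
        exact (abs_sum_le_sum_abs _ _).trans (sum_le_sum fun j _ => hterm j)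
    _ = 2 * dist x y := by
        rw [sum_const, card_univ, Fintype.card_fin, nsmul_eq_mul]
        field_simp

theorem norm_orderParam_le_one (x : Fin N → ℝ) : ‖orderParam x‖ ≤ 1 := by
  rcases Nat.eq_zero_or_pos N with rfl | hN
  · simp [orderParam]
  calc ‖orderParam x‖ ≤ 1 / N * ∑ j : Fin N, ‖exp (I * (x j : ℂ))‖ := by
        rw [orderParam, norm_mul]
        gcongr
        · simp
        · exact norm_sum_le _ _
    _ = 1 := by
        simp only [mul_comm I, norm_exp_ofReal_mul_I, sum_const, card_univ,
          Fintype.card_fin, nsmul_eq_mul, mul_one]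
        field_simp

theorem re_I_mul_exp_mul_conj_orderParam (x : Fin N → ℝ) (j : Fin N) :
    (I * exp (I * x j) * conj (orderParam x)).re = field x j := by
  have hterm (k : Fin N) :
      (I * exp (I * x j) * conj (exp (I * x k))).re = -Real.sin (x j - x k) := by
    rw [← Complex.exp_conj, map_mul, conj_I, conj_ofReal, mul_assoc, ← Complex.exp_add]
    rw [show I * x j + -I * x k = ((x j - x k : ℝ) : ℂ) * I by push_cast; ring, I_mul_re,
      exp_ofReal_mul_I_im]
  have hconj : conj (orderParam x) = ((1 / N : ℝ) : ℂ) * ∑ k, conj (exp (I * x k)) := by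
    simp [orderParam, map_sum]
  rw [hconj, mul_left_comm, mul_sum, re_ofReal_mul, re_sum, field, neg_mul, ← mul_neg,
    ← sum_neg_distrib]
  simp only [hterm]

theorem hasDerivAt_norm_sq_orderParam {x : ℝ → Fin N → ℝ} {x' : Fin N → ℝ} {t : ℝ}
    (hx : HasDerivAt x x' t) :
    HasDerivAt (fun s => ‖orderParam (x s)‖ ^ 2) (2 / N * ∑ j, x' j * field (x t) j) t := by
  have hexp (j : Fin N) : HasDerivAt (fun s => exp (I * x s j)) (exp (I * x t j) * (I * x' j)) t :=
    (((hasDerivAt_pi.1 hx j).ofReal_comp).const_mul I).cexp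
  have hz : HasDerivAt (fun s => orderParam (x s))
      ((1:ℂ) / ((N:ℝ):ℂ) * ∑ j, exp (I * x t j) * (I * x' j)) t :=
    (HasDerivAt.fun_sum (u := univ) fun j _ => hexp j).const_mul _
  convert hz.norm_sq using 1
  have hsum : (1:ℂ) / ((N:ℝ):ℂ) * (∑ j, exp (I * x t j) * (I * x' j)) * conj (orderParam (x t)) =
      ∑ j, ((1 / N * x' j : ℝ) : ℂ) * (I * exp (I * x t j) * conj (orderParam (x t))) := by
    rw [mul_sum, sum_mul]
    refine sum_congr rfl fun j _ => ?_
    push_cast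
    ring
  rw [Complex.inner, hsum, re_sum, mul_sum, mul_sum]
  refine sum_congr rfl fun j _ => ?_
  rw [re_ofReal_mul, re_I_mul_exp_mul_conj_orderParam]
  ring

theorem field_ne_zero {x : ℝ → Fin N → ℝ} (hx : ∀ t ≥ 0, HasDerivAt x (field (x t)) t)
    (hmove : ¬ ∀ t ≥ 0, x t = x 0) {t : ℝ} (ht : 0 < t) : field (x t) ≠ 0 := fun h0 => by
  have hconst := ODE_solution_eqOn_Ici_of_equilibrium lipschitzWith_field hx ht h0
  exact hmove fun s hs => (hconst hs).trans (hconst Set.self_mem_Ici).symm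

theorem two_div_mul_sum_field_mul_self_pos {x : ℝ → Fin N → ℝ}
    (hx : ∀ t ≥ 0, HasDerivAt x (field (x t)) t) (hmove : ¬ ∀ t ≥ 0, x t = x 0) {t : ℝ}
    (ht : 0 < t) : 0 < 2 / N * ∑ j, field (x t) j * field (x t) j := by
  obtain ⟨j, hj⟩ := Function.ne_iff.1 (field_ne_zero hx hmove ht)
  have hN : (0:ℝ) < N := Nat.cast_pos.2 j.pos
  exact mul_pos (by positivity)
    (sum_pos' (fun i _ => mul_self_nonneg _) ⟨j, mem_univ j, mul_self_pos.2 hj⟩)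

theorem strictMonoOn_norm_orderParam {x : ℝ → Fin N → ℝ}
    (hx : ∀ t ≥ 0, HasDerivAt x (field (x t)) t) (hmove : ¬ ∀ t ≥ 0, x t = x 0) :
    StrictMonoOn (fun t => ‖orderParam (x t)‖) (Set.Ici 0) := by
  have hsq : StrictMonoOn (fun t => ‖orderParam (x t)‖ ^ 2) (Set.Ici 0) := by
    refine strictMonoOn_of_hasDerivWithinAt_pos (convex_Ici 0)
      (f' := fun t => 2 / N * ∑ j, field (x t) j * field (x t) j)
      (HasDerivAt.continuousOn fun t ht => hasDerivAt_norm_sq_orderParam (hx t ht))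
      (fun t ht => ?_) (fun t ht => ?_)
    · exact (hasDerivAt_norm_sq_orderParam (hx t (interior_subset ht))).hasDerivWithinAt
    · exact two_div_mul_sum_field_mul_self_pos hx hmove (by simpa using ht)
  exact fun s hs t ht hst => lt_of_pow_lt_pow_left₀ 2 (norm_nonneg _) (hsq hs ht hst)

theorem exists_hasDerivAt_norm_orderParam_pos {x : ℝ → Fin N → ℝ}
    (hx : ∀ t ≥ 0, HasDerivAt x (field (x t)) t) (hmove : ¬ ∀ t ≥ 0, x t = x 0) {t : ℝ}
    (ht : 0 < t) (hz : orderParam (x t) ≠ 0) :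
    ∃ d > 0, HasDerivAt (fun s => ‖orderParam (x s)‖) d t := by
  have hsqrt := (hasDerivAt_norm_sq_orderParam (hx t ht.le)).sqrt (by positivity)
  simp only [Real.sqrt_sq (norm_nonneg _)] at hsqrt
  exact ⟨_, div_pos (two_div_mul_sum_field_mul_self_pos hx hmove ht) (by positivity), hsqrt⟩

end Kuramoto

theorem kuramoto_R_monotone_general (N : ℕ) (θ : Fin N → ℝ → ℝ)
    (hode : ∀ i, ∀ t ≥ (0:ℝ),
      HasDerivAt (θ i) (-(1 / (N:ℝ)) * ∑ j : Fin N, Real.sin (θ i t - θ j t)) t)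
    (hnonstat : ¬ (∀ t ≥ (0:ℝ), ∀ i, θ i t = θ i 0))
    (z : ℝ → ℂ)
    (hz : ∀ t, z t = (1 / (N:ℝ)) * ∑ j : Fin N, Complex.exp (Complex.I * (θ j t : ℂ))) :
    (∀ t > (0:ℝ), z t ≠ 0) ∧
    (∀ t > (0:ℝ), ∃ d > (0:ℝ), HasDerivAt (fun s => ‖z s‖) d t) ∧
    (∃ Rstar ∈ Set.Ioc (0:ℝ) 1,
      Tendsto (fun t => ‖z t‖) atTop (nhds Rstar)) := by
  open Kuramoto in
  set x : ℝ → Fin N → ℝ := fun t i => θ i t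
  have hx : ∀ t ≥ (0:ℝ), HasDerivAt x (field (x t)) t :=
    fun t ht => hasDerivAt_pi.2 fun i => hode i t ht
  have hmove : ¬ ∀ t ≥ (0:ℝ), x t = x 0 := fun h => hnonstat fun t ht i => congrFun (h t ht) i
  obtain rfl : z = fun t => orderParam (x t) := funext hz
  have hmono := strictMonoOn_norm_orderParam hx hmove
  have hpos (t : ℝ) (ht : 0 < t) : 0 < ‖orderParam (x t)‖ :=
    (norm_nonneg _).trans_lt (hmono Set.self_mem_Ici ht.le ht)
  obtain ⟨l, hl⟩ := hmono.monotoneOn.exists_tendsto_atTop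
    ⟨1, Set.forall_mem_image.2 fun t _ => norm_orderParam_le_one (x t)⟩
  have hl_pos : 0 < l := (hpos 1 one_pos).trans_le <| ge_of_tendsto hl <|
    (eventually_ge_atTop 1).mono fun t ht =>
      hmono.monotoneOn (Set.mem_Ici.2 zero_le_one) (Set.mem_Ici.2 (zero_le_one.trans ht)) ht
  refine ⟨fun t ht => norm_pos_iff.1 (hpos t ht),
    fun t ht => exists_hasDerivAt_norm_orderParam_pos hx hmove ht (norm_pos_iff.1 (hpos t ht)),
    l, ⟨hl_pos, le_of_tendsto' hl fun t => norm_orderParam_le_one _⟩, hl⟩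

/-- For a non-stationary solution of the Kuramoto system of identical oscillators:
(1) `z(t) ≠ 0` for all `t > 0` (so `φ(t)` is well defined);
(2) `Ṙ(t) > 0` for all `t > 0`;
(3) `R(t)` converges, as `t → ∞`, to some `R* ∈ (0,1]`. -/
theorem kuramoto_R_monotone (N : ℕ) (hN : 0 < N) (θ : Fin N → ℝ → ℝ)
    (hode : ∀ i, ∀ t ≥ (0:ℝ),
      HasDerivAt (θ i) (-(1 / (N:ℝ)) * ∑ j : Fin N, Real.sin (θ i t - θ j t)) t)
    (hnonstat : ¬ (∀ t ≥ (0:ℝ), ∀ i, θ i t = θ i 0))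
    (z : ℝ → ℂ)
    (hz : ∀ t, z t = (1 / (N:ℝ)) * ∑ j : Fin N, Complex.exp (Complex.I * (θ j t : ℂ))) :
    (∀ t > (0:ℝ), z t ≠ 0) ∧
    (∀ t > (0:ℝ), ∃ d > (0:ℝ), HasDerivAt (fun s => ‖z s‖) d t) ∧
    (∃ Rstar ∈ Set.Ioc (0:ℝ) 1,
      Tendsto (fun t => ‖z t‖) atTop (nhds Rstar)) :=
  kuramoto_R_monotone_general N θ hode hnonstat z hz
end

section
/- Let δ : [0,∞) → ℝ be the solution of the scalar ODE δ̇(t) = (2/3) sin(δ(t)) (1/2 − cos(δ(t))) with initial datum δ(0) = δ₀ ∈ [0,π]. Then: if δ₀ ∈ [0,π/3), δ(t) → 0 as t → ∞; if δ₀ = π/3, δ(t) = π/3 for all t; and if δ₀ ∈ (π/3,π], δ(t) → π as t → ∞. -/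
/-!
The vector field `F y = (2/3) sin y (1/2 - cos y)` vanishes at `0`, `π/3` and `π`, is negative
on `(0, π/3)` and positive on `(π/3, π)`. Since `F` is Lipschitz, a solution cannot reach an
equilibrium in finite time, so a solution starting strictly between two consecutive equilibria
stays between them. There it is monotone, hence convergent, and its limit is an equilibrium:
the endpoint towards which `F` pushes it.
-/

open Filter Real Set Topology

theorem tendsto_atTop_csInf_of_antitoneOn_Ici {α β : Type*} [Preorder α] [IsDirectedOrder α]
    [ConditionallyCompleteLinearOrder β] [TopologicalSpace β] [OrderTopology β]
    {f : α → β} {c : α}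
    (h_ant : AntitoneOn f (Ici c)) (h_bdd : BddBelow (f '' Ici c)) :
    Tendsto f atTop (𝓝 (sInf (f '' Ici c))) := by
  rw [← tendsto_comp_val_Ici_atTop (a := c), image_eq_range]
  rw [image_eq_range] at h_bdd
  exact tendsto_atTop_ciInf (fun s t hst => h_ant s.2 t.2 hst) h_bdd

def IsForwardSolution (F x : ℝ → ℝ) : Prop :=
  ∀ t ≥ (0 : ℝ), HasDerivAt x (F (x t)) t

namespace IsForwardSolution

variable {F x : ℝ → ℝ} {K : NNReal}

theorem continuousOn (hx : IsForwardSolution F x) : ContinuousOn x (Ici 0) :=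
  fun t ht => (hx t ht).continuousAt.continuousWithinAt

theorem neg (hx : IsForwardSolution F x) : IsForwardSolution (fun y => -F (-y)) (-x) :=
  fun t ht => by simpa using (hx t ht).neg

theorem eq_of_apply_eq (hx : IsForwardSolution F x) (hF : LipschitzWith K F) {c t₁ t : ℝ}
    (hc : F c = 0) (ht₁ : 0 ≤ t₁) (hx₁ : x t₁ = c) (ht : 0 ≤ t) : x t = c := by
  have hconst (s : ℝ) : HasDerivAt (fun _ => c) (F c) s := hc ▸ hasDerivAt_const s c
  rcases le_total t₁ t with h | h
  · exact ODE_solution_unique (v := fun _ => F) (fun _ => hF)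
      (hx.continuousOn.mono fun s hs => ht₁.trans hs.1)
      (fun s hs => (hx s (ht₁.trans hs.1)).hasDerivWithinAt)
      continuousOn_const (fun s _ => (hconst s).hasDerivWithinAt) hx₁ ⟨h, le_rfl⟩
  · exact ODE_solution_unique_of_mem_Icc_left (v := fun _ => F) (s := fun _ => univ)
      (fun _ _ => hF.lipschitzOnWith) (hx.continuousOn.mono fun s hs => ht.trans hs.1)
      (fun s hs => (hx s (ht.trans hs.1.le)).hasDerivWithinAt) (fun _ _ => trivial)
      continuousOn_const (fun s _ => (hconst s).hasDerivWithinAt) (fun _ _ => trivial) hx₁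
      ⟨le_rfl, h⟩

theorem mapsTo_Ioo (hx : IsForwardSolution F x) (hF : LipschitzWith K F) {a b : ℝ}
    (ha : F a = 0) (hb : F b = 0) (h0 : x 0 ∈ Ioo a b) : MapsTo x (Ici 0) (Ioo a b) := by
  intro t ht
  have hconn : IsPreconnected (x '' Icc 0 t) :=
    isPreconnected_Icc.image x (hx.continuousOn.mono Icc_subset_Ici_self)
  have hx₀ : x 0 ∈ x '' Icc 0 t := mem_image_of_mem x ⟨le_rfl, ht⟩
  have hxt : x t ∈ x '' Icc 0 t := mem_image_of_mem x ⟨ht, le_rfl⟩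
  refine ⟨lt_of_not_ge fun h => ?_, lt_of_not_ge fun h => ?_⟩
  · obtain ⟨s, hs, hxs⟩ := hconn.Icc_subset hxt hx₀ ⟨h, h0.1.le⟩
    exact h0.1.ne' (hx.eq_of_apply_eq hF ha hs.1 hxs le_rfl)
  · obtain ⟨s, hs, hxs⟩ := hconn.Icc_subset hx₀ hxt ⟨h0.2.le, h⟩
    exact h0.2.ne (hx.eq_of_apply_eq hF hb hs.1 hxs le_rfl)

theorem antitoneOn (hx : IsForwardSolution F x) (hF : ∀ t ≥ 0, F (x t) ≤ 0) :
    AntitoneOn x (Ici 0) := by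
  refine antitoneOn_of_deriv_nonpos (convex_Ici 0) hx.continuousOn (fun t ht => ?_)
    fun t ht => ?_ <;> rw [interior_Ici] at ht
  · exact (hx t ht.le).differentiableAt.differentiableWithinAt
  · exact (hx t ht.le).deriv ▸ hF t ht.le

theorem map_eq_zero_of_tendsto (hx : IsForwardSolution F x) (hF : Continuous F) {L : ℝ}
    (hL : Tendsto x atTop (𝓝 L)) : F L = 0 := by
  have hmvt : ∀ t ≥ (0 : ℝ), ∃ ξ ∈ Ioo t (t + 1), F (x ξ) = x (t + 1) - x t := by
    intro t ht
    obtain ⟨ξ, hξ, h⟩ := exists_hasDerivAt_eq_slope x (fun s => F (x s)) (lt_add_one t)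
      (hx.continuousOn.mono fun s hs => ht.trans hs.1) fun s hs => hx s (ht.trans hs.1.le)
    exact ⟨ξ, hξ, by rw [h, add_sub_cancel_left, div_one]⟩
  choose! ξ hξ hFξ using hmvt
  have hξ_top : Tendsto ξ atTop atTop :=
    tendsto_atTop_mono' _ ((eventually_ge_atTop 0).mono fun t ht => (hξ t ht).1.le) tendsto_id
  have hFL : Tendsto (fun t => F (x (ξ t))) atTop (𝓝 (F L)) :=
    (hF.tendsto L).comp (hL.comp hξ_top)
  have hdiff : Tendsto (fun t => x (t + 1) - x t) atTop (𝓝 0) := by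
    simpa using (hL.comp (tendsto_atTop_add_const_right _ 1 tendsto_id)).sub hL
  exact tendsto_nhds_unique (hFL.congr' ((eventually_ge_atTop 0).mono hFξ)) hdiff

theorem tendsto_of_neg_on_Ioo (hx : IsForwardSolution F x) (hF : LipschitzWith K F) {a b : ℝ}
    (ha : F a = 0) (hb : F b = 0) (hneg : ∀ y ∈ Ioo a b, F y < 0) (h0 : x 0 ∈ Ico a b) :
    Tendsto x atTop (𝓝 a) := by
  rcases h0.1.eq_or_lt with h | h
  · exact tendsto_const_nhds.congr' <| (eventually_ge_atTop 0).mono fun t ht =>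
      (hx.eq_of_apply_eq hF ha le_rfl h.symm ht).symm
  have hmem := hx.mapsTo_Ioo hF ha hb ⟨h, h0.2⟩
  have hanti := hx.antitoneOn fun t ht => (hneg _ (hmem ht)).le
  obtain ⟨L, hL⟩ : ∃ L, Tendsto x atTop (𝓝 L) :=
    ⟨_, tendsto_atTop_csInf_of_antitoneOn_Ici hanti
      ⟨a, forall_mem_image.2 fun t ht => (hmem ht).1.le⟩⟩
  have haL : a ≤ L := ge_of_tendsto hL <| (eventually_ge_atTop 0).mono fun t ht => (hmem ht).1.le
  have hLb : L < b := (le_of_tendsto hL <| (eventually_ge_atTop 0).mono fun t ht =>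
    hanti self_mem_Ici ht ht).trans_lt h0.2
  rcases haL.eq_or_lt with rfl | haL
  · exact hL
  · exact absurd (hx.map_eq_zero_of_tendsto hF.continuous hL) (hneg L ⟨haL, hLb⟩).ne

theorem tendsto_of_pos_on_Ioo (hx : IsForwardSolution F x) (hF : LipschitzWith K F) {a b : ℝ}
    (ha : F a = 0) (hb : F b = 0) (hpos : ∀ y ∈ Ioo a b, 0 < F y) (h0 : x 0 ∈ Ioc a b) :
    Tendsto x atTop (𝓝 b) := by
  have h := hx.neg.tendsto_of_neg_on_Ioo (hF.comp LipschitzWith.id.neg).neg (a := -b) (b := -a)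
    (by simpa using hb) (by simpa using ha)
    (fun y hy => neg_neg_iff_pos.2 (hpos (-y) ⟨lt_neg.1 hy.2, neg_lt.1 hy.1⟩))
    ⟨neg_le_neg h0.2, neg_lt_neg h0.1⟩
  simpa using h.neg

end IsForwardSolution

noncomputable def kuramotoField (y : ℝ) : ℝ := (2 / 3) * sin y * (1 / 2 - cos y)

theorem hasDerivAt_kuramotoField (y : ℝ) :
    HasDerivAt kuramotoField ((2 / 3) * (cos y * (1 / 2 - cos y) + sin y * sin y)) y :=
  (((hasDerivAt_sin y).const_mul (2 / 3)).mul
    ((hasDerivAt_cos y).const_sub (1 / 2))).congr_deriv (by ring)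

theorem lipschitzWith_kuramotoField : LipschitzWith 1 kuramotoField := by
  refine lipschitzWith_of_nnnorm_deriv_le (fun y => (hasDerivAt_kuramotoField y).differentiableAt)
    fun y => ?_
  rw [← NNReal.coe_le_coe, coe_nnnorm, (hasDerivAt_kuramotoField y).deriv, Real.norm_eq_abs,
    NNReal.coe_one, abs_le]
  -- The derivative is `(2/3) (1 + cos y / 2 - 2 cos² y)`, which ranges over `[-1, 11/16]`.
  constructor <;> nlinarith [sin_sq_add_cos_sq y, neg_one_le_cos y, cos_le_one y,
    sq_nonneg (cos y - 1 / 8), sq_nonneg (cos y + 1)]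

theorem kuramotoField_zero : kuramotoField 0 = 0 := by simp [kuramotoField]

theorem kuramotoField_pi_div_three : kuramotoField (π / 3) = 0 := by
  simp [kuramotoField, cos_pi_div_three]

theorem kuramotoField_pi : kuramotoField π = 0 := by simp [kuramotoField]

theorem kuramotoField_neg {y : ℝ} (hy : y ∈ Ioo 0 (π / 3)) : kuramotoField y < 0 := by
  have hsin : 0 < sin y := sin_pos_of_pos_of_lt_pi hy.1 (hy.2.trans (by linarith [pi_pos]))
  have hcos : cos (π / 3) < cos y :=
    cos_lt_cos_of_nonneg_of_le_pi hy.1.le (by linarith [pi_pos]) hy.2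
  rw [cos_pi_div_three] at hcos
  unfold kuramotoField
  nlinarith

theorem kuramotoField_pos {y : ℝ} (hy : y ∈ Ioo (π / 3) π) : 0 < kuramotoField y := by
  have hsin : 0 < sin y := sin_pos_of_pos_of_lt_pi (by linarith [pi_pos, hy.1]) hy.2
  have hcos : cos y < cos (π / 3) :=
    cos_lt_cos_of_nonneg_of_le_pi (by linarith [pi_pos]) hy.2.le hy.1
  rw [cos_pi_div_three] at hcos
  unfold kuramotoField
  nlinarith

theorem kuramoto_three_oscillators_example_general (δ : ℝ → ℝ) (δ₀ : ℝ)
    (h0 : δ 0 = δ₀)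
    (hode : ∀ t ≥ (0:ℝ),
      HasDerivAt δ ((2/3) * Real.sin (δ t) * (1/2 - Real.cos (δ t))) t) :
    (δ₀ ∈ Set.Ico (0:ℝ) (π/3) → Tendsto δ atTop (nhds 0)) ∧
    (δ₀ = π/3 → ∀ t ≥ (0:ℝ), δ t = π/3) ∧
    (δ₀ ∈ Set.Ioc (π/3) π → Tendsto δ atTop (nhds π)) := by
  have hδ : IsForwardSolution kuramotoField δ := hode
  subst h0
  exact ⟨hδ.tendsto_of_neg_on_Ioo lipschitzWith_kuramotoField kuramotoField_zero
      kuramotoField_pi_div_three fun _ => kuramotoField_neg,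
    fun h _ => hδ.eq_of_apply_eq lipschitzWith_kuramotoField kuramotoField_pi_div_three le_rfl h,
    hδ.tendsto_of_pos_on_Ioo lipschitzWith_kuramotoField kuramotoField_pi_div_three
      kuramotoField_pi fun _ => kuramotoField_pos⟩

/-- Asymptotics of the scalar ODE `δ̇ = (2/3) sin δ (1/2 - cos δ)` with `δ(0) = δ₀ ∈ [0,π]`:
if `δ₀ ∈ [0,π/3)` then `δ(t) → 0`; if `δ₀ = π/3` then `δ ≡ π/3`; if `δ₀ ∈ (π/3,π]` then
`δ(t) → π`. -/
theorem kuramoto_three_oscillators_example (δ : ℝ → ℝ) (δ₀ : ℝ)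
    (h0 : δ 0 = δ₀) (hδ₀ : δ₀ ∈ Set.Icc (0:ℝ) π)
    (hode : ∀ t ≥ (0:ℝ),
      HasDerivAt δ ((2/3) * Real.sin (δ t) * (1/2 - Real.cos (δ t))) t) :
    (δ₀ ∈ Set.Ico (0:ℝ) (π/3) → Tendsto δ atTop (nhds 0)) ∧
    (δ₀ = π/3 → ∀ t ≥ (0:ℝ), δ t = π/3) ∧
    (δ₀ ∈ Set.Ioc (π/3) π → Tendsto δ atTop (nhds π)) :=
  kuramoto_three_oscillators_example_general δ δ₀ h0 hode
end

section
/- Let ρ* be a Borel probability measure on the circle 𝕋 = ℝ/2πℤ and define the current v(θ) = −∫_𝕋 sin(θ − θ') dρ*(θ'). Then ρ* is a stationary solution of the kinetic Kuramoto equation, i.e. ∫_𝕋 h'(θ) v(θ) dρ*(θ) = 0 for every smooth 2π-periodic function h, if and only if one of the following holds: (1) ∫_𝕋 e^{iθ} dρ*(θ) = 0; or (2) ρ* is of type (c₁,c₂): there exist φ* and constants c₁ > c₂ ≥ 0 with c₁ + c₂ = 1 such that ρ* = c₁ δ_{φ*} + c₂ δ_{φ*+π}. -/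
open MeasureTheory Real

noncomputable def kkSl : AddCircle (2*π) → ℝ := Real.sin_periodic.lift
noncomputable def kkCl : AddCircle (2*π) → ℝ := Real.cos_periodic.lift

@[simp] lemma kkSl_coe (t : ℝ) : kkSl ↑t = Real.sin t := rfl
@[simp] lemma kkCl_coe (t : ℝ) : kkCl ↑t = Real.cos t := rfl

lemma kkSl_cont : Continuous kkSl := Real.continuous_sin.quotient_liftOn' _
lemma kkCl_cont : Continuous kkCl := Real.continuous_cos.quotient_liftOn' _

lemma kkIntegrable {X : Type*} [TopologicalSpace X] [CompactSpace X] [MeasurableSpace X]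
    [OpensMeasurableSpace X] {E : Type*} [NormedAddCommGroup E] [SecondCountableTopology E]
    (μ : Measure X) [IsFiniteMeasure μ] {f : X → E} (hf : Continuous f) : Integrable f μ :=
  hf.integrable_of_hasCompactSupport (HasCompactSupport.of_compactSpace f)

lemma kkOfRealInt {X : Type*} [MeasurableSpace X] (μ : Measure X) (f : X → ℝ) :
    ∫ x, (f x : ℂ) ∂μ = ((∫ x, f x ∂μ : ℝ) : ℂ) := integral_ofReal

lemma kkToCircle (t : ℝ) : (AddCircle.toCircle (↑t : AddCircle (2*π)) : ℂ)
    = (Real.cos t : ℂ) + (Real.sin t : ℂ) * Complex.I := by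
  rw [AddCircle.toCircle_apply_mk]
  have hπ : (2*π) ≠ 0 := by positivity
  rw [div_self hπ, one_mul, Circle.coe_exp, Complex.exp_mul_I, Complex.ofReal_cos,
    Complex.ofReal_sin]

/-- A Borel probability measure `ρ*` on the circle `𝕋 = ℝ/2πℤ`, with current
`v(θ) = -∫ sin(θ-θ') dρ*(θ')`, is a stationary solution of the kinetic Kuramoto
equation (`∫ h'(θ) v(θ) dρ* = 0` for every smooth 2π-periodic `h`) iff either
`∫ e^{iθ} dρ* = 0`, or `ρ*` is of type `(c₁,c₂)`:
`ρ* = c₁ δ_{φ*} + c₂ δ_{φ*+π}` with `c₁ > c₂ ≥ 0`, `c₁ + c₂ = 1`. -/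
theorem kinetic_kuramoto_stationary_characterization
    (ρ : Measure (AddCircle (2*π))) [IsProbabilityMeasure ρ]
    (v : AddCircle (2*π) → ℝ)
    (hv : ∀ θ : AddCircle (2*π), v θ = - ∫ θ', Real.sin_periodic.lift (θ - θ') ∂ρ) :
    (∀ (h : ℝ → ℝ), ContDiff ℝ (⊤ : ℕ∞) h → Function.Periodic h (2*π) →
      ∀ (hper' : Function.Periodic (deriv h) (2*π)),
        ∫ θ, hper'.lift θ * v θ ∂ρ = 0) ↔
    ((∫ θ, (AddCircle.toCircle θ : ℂ) ∂ρ = 0) ∨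
     (∃ (φ : AddCircle (2*π)) (c₁ c₂ : ℝ), c₁ > c₂ ∧ c₂ ≥ 0 ∧ c₁ + c₂ = 1 ∧
        ρ = ENNReal.ofReal c₁ • Measure.dirac φ +
            ENNReal.ofReal c₂ • Measure.dirac (φ + (π : AddCircle (2*π))))) := by
  haveI : Fact (0 < 2*π) := ⟨by positivity⟩
  set C : ℝ := ∫ θ, kkCl θ ∂ρ with hCdef
  set S : ℝ := ∫ θ, kkSl θ ∂ρ with hSdef
  have vform : ∀ θ, v θ = S * kkCl θ - C * kkSl θ := by
    intro θ
    obtain ⟨t, rfl⟩ := QuotientAddGroup.mk_surjective θ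
    rw [hv]
    have h1 : (fun θ' => Real.sin_periodic.lift ((↑t : AddCircle (2*π)) - θ'))
        = fun θ' => Real.sin t * kkCl θ' - Real.cos t * kkSl θ' := by
      funext θ'
      obtain ⟨s, rfl⟩ := QuotientAddGroup.mk_surjective θ'
      rw [← QuotientAddGroup.mk_sub, Function.Periodic.lift_coe, Real.sin_sub, kkCl_coe, kkSl_coe]
    rw [h1, integral_sub ((kkIntegrable ρ kkCl_cont).const_mul _)
        ((kkIntegrable ρ kkSl_cont).const_mul _), integral_const_mul, integral_const_mul,
        kkCl_coe, kkSl_coe, ← hCdef, ← hSdef]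
    ring
  have hR : (∫ θ, (AddCircle.toCircle θ : ℂ) ∂ρ) = (C : ℂ) + (S : ℂ) * Complex.I := by
    have h1 : (fun θ : AddCircle (2*π) => (AddCircle.toCircle θ : ℂ))
        = fun θ => (kkCl θ : ℂ) + (kkSl θ : ℂ) * Complex.I := by
      funext θ
      obtain ⟨t, rfl⟩ := QuotientAddGroup.mk_surjective θ
      rw [kkToCircle, kkCl_coe, kkSl_coe]
    have hc1 : Continuous fun θ : AddCircle (2*π) => (kkCl θ : ℂ) :=
      Complex.continuous_ofReal.comp kkCl_cont
    have hc2 : Continuous fun θ : AddCircle (2*π) => (kkSl θ : ℂ) * Complex.I :=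
      (Complex.continuous_ofReal.comp kkSl_cont).mul continuous_const
    rw [h1, integral_add (kkIntegrable ρ hc1) (kkIntegrable ρ hc2), integral_mul_const,
        kkOfRealInt, kkOfRealInt, ← hCdef, ← hSdef]
  constructor
  · -- forward direction
    intro hstat
    by_cases hCS : C = 0 ∧ S = 0
    · left; rw [hR, hCS.1, hCS.2]; simp
    right
    -- use the test function h(x) = S sin x + C cos x
    set h : ℝ → ℝ := fun x => S * Real.sin x + C * Real.cos x with hhdef
    have hCd : ContDiff ℝ (⊤ : ℕ∞) h :=
      (contDiff_const.mul Real.contDiff_sin).add (contDiff_const.mul Real.contDiff_cos)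
    have hper : Function.Periodic h (2*π) := by
      intro x; simp only [hhdef, Real.sin_periodic x, Real.cos_periodic x]
    have hderiv : deriv h = fun x => S * Real.cos x - C * Real.sin x := by
      funext x
      have h1 : HasDerivAt h (S * Real.cos x + C * (-Real.sin x)) x :=
        ((Real.hasDerivAt_sin x).const_mul S).add ((Real.hasDerivAt_cos x).const_mul C)
      rw [h1.deriv]; ring
    have hper' : Function.Periodic (deriv h) (2*π) := by
      rw [hderiv]; intro x; simp only [Real.sin_periodic x, Real.cos_periodic x]
    have h0 := hstat h hCd hper hper'
    have hlift : ∀ θ, hper'.lift θ = v θ := by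
      intro θ
      obtain ⟨t, rfl⟩ := QuotientAddGroup.mk_surjective θ
      rw [Function.Periodic.lift_coe, hderiv, vform, kkCl_coe, kkSl_coe]
    simp only [hlift] at h0
    have hvcont : Continuous v := by
      have : v = fun θ => S * kkCl θ - C * kkSl θ := funext vform
      rw [this]
      exact (continuous_const.mul kkCl_cont).sub (continuous_const.mul kkSl_cont)
    have hae : ∀ᵐ θ ∂ρ, v θ = 0 := by
      have h2 := (integral_eq_zero_iff_of_nonneg (fun θ => mul_self_nonneg (v θ))
        (kkIntegrable ρ (hvcont.mul hvcont))).mp h0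
      filter_upwards [h2] with θ hθ
      exact mul_self_eq_zero.mp hθ
    -- the order parameter
    set z : ℂ := (C : ℂ) + (S : ℂ) * Complex.I with hzdef
    have hz : z ≠ 0 := by
      intro hz0
      apply hCS
      rw [hzdef] at hz0
      constructor
      · simpa using congrArg Complex.re hz0
      · simpa using congrArg Complex.im hz0
    set ψ : ℝ := z.arg with hψdef
    set r : ℝ := ‖z‖ with hrdef
    have hr : 0 < r := by simpa [hrdef] using (norm_pos_iff.mpr hz)
    have hzre : z.re = C := by simp [hzdef]
    have hzim : z.im = S := by simp [hzdef]
    have hcosψ : r * Real.cos ψ = C := by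
      rw [hψdef, Complex.cos_arg hz, hzre]; field_simp; rw [hrdef]; ring
    have hsinψ : r * Real.sin ψ = S := by
      rw [hψdef, Complex.sin_arg, hzim]; field_simp; rw [hrdef]; ring
    have hvt : ∀ t : ℝ, v ↑t = r * Real.sin (ψ - t) := by
      intro t
      rw [vform, kkCl_coe, kkSl_coe, ← hcosψ, ← hsinψ, Real.sin_sub]; ring
    set pair : Set (AddCircle (2*π)) := {(↑ψ : AddCircle (2*π)), ↑(ψ+π)} with hpairdef
    have hzero : ∀ θ, v θ = 0 → θ ∈ pair := by
      intro θ
      obtain ⟨t, rfl⟩ := QuotientAddGroup.mk_surjective θ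
      intro hvθ
      rw [hvt] at hvθ
      have hsin0 : Real.sin (ψ - t) = 0 := by
        rcases mul_eq_zero.mp hvθ with h'|h'
        · exact absurd h' (ne_of_gt hr)
        · exact h'
      obtain ⟨n, hn⟩ := Real.sin_eq_zero_iff.mp hsin0
      rcases Int.even_or_odd n with ⟨k, hk⟩|⟨k, hk⟩
      · left
        have h2 : ((t - ψ : ℝ) : AddCircle (2*π)) = 0 := by
          refine (AddCircle.coe_eq_zero_iff _).mpr ⟨-k, ?_⟩
          have : ((n : ℝ)) = 2*k := by rw [hk]; push_cast; ring
          rw [zsmul_eq_mul]; push_cast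
          rw [this] at hn; linarith
        rw [QuotientAddGroup.mk_sub, sub_eq_zero] at h2
        exact h2
      · right
        have h2 : ((t - (ψ+π) : ℝ) : AddCircle (2*π)) = 0 := by
          refine (AddCircle.coe_eq_zero_iff _).mpr ⟨-(k+1), ?_⟩
          have : ((n : ℝ)) = 2*k+1 := by rw [hk]; push_cast; ring
          rw [zsmul_eq_mul]; push_cast
          rw [this] at hn; linarith
        rw [QuotientAddGroup.mk_sub, sub_eq_zero] at h2
        exact h2
    have hpairm : MeasurableSet pair := (measurableSet_singleton _).insert _
    have hnull : ρ pairᶜ = 0 := by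
      refine measure_mono_null (fun θ hθ h' => hθ (hzero θ h')) (ae_iff.mp hae)
    have hne : (↑ψ : AddCircle (2*π)) ≠ ↑(ψ+π) := by
      intro hEq
      have h2 : ((ψ - (ψ+π) : ℝ) : AddCircle (2*π)) = 0 := by
        rw [QuotientAddGroup.mk_sub, hEq, sub_self]
      obtain ⟨n, hn⟩ := (AddCircle.coe_eq_zero_iff _).mp h2
      rw [zsmul_eq_mul] at hn
      have h3 : ((2*n+1 : ℤ) : ℝ) * π = 0 := by push_cast; linarith
      rcases mul_eq_zero.mp h3 with h'|h'
      · have : (2*n+1 : ℤ) = 0 := by exact_mod_cast h'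
        omega
      · exact Real.pi_ne_zero h'
    set a : ENNReal := ρ {(↑ψ : AddCircle (2*π))} with hadef
    set b : ENNReal := ρ {(↑(ψ+π) : AddCircle (2*π))} with hbdef
    have hpairval : ρ pair = a + b := by
      rw [hpairdef, Set.insert_eq,
        measure_union (Set.disjoint_singleton.mpr hne) (measurableSet_singleton _)]
    have hρeq : ρ = a • Measure.dirac (↑ψ : AddCircle (2*π)) + b • Measure.dirac ((↑(ψ+π) : AddCircle (2*π))) := by
      ext s hs
      rw [Measure.add_apply, Measure.smul_apply, Measure.smul_apply,
        Measure.dirac_apply' _ hs, Measure.dirac_apply' _ hs, smul_eq_mul, smul_eq_mul]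
      have h1 : ρ s = ρ (s ∩ pair) := by
        have h2 := measure_inter_add_diff (μ := ρ) s hpairm
        have h3 : ρ (s \ pair) = 0 := measure_mono_null (fun x hx => hx.2) hnull
        rw [← h2, h3, add_zero]
      rw [h1]
      by_cases h2 : (↑ψ : AddCircle (2*π)) ∈ s <;>
        by_cases h3 : (↑(ψ+π) : AddCircle (2*π)) ∈ s
      · have h4 : s ∩ pair = pair := by
          refine Set.inter_eq_self_of_subset_right ?_
          intro x hx
          rcases hx with rfl|hx
          · exact h2
          · rw [Set.mem_singleton_iff] at hx; subst hx; exact h3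
        rw [h4, hpairval, Set.indicator_of_mem h2, Set.indicator_of_mem h3]
        simp
      · have h4 : s ∩ pair = {(↑ψ : AddCircle (2*π))} := by
          ext x
          constructor
          · rintro ⟨hxs, rfl|hx⟩
            · rfl
            · rw [Set.mem_singleton_iff] at hx; subst hx; exact absurd hxs h3
          · rintro rfl; exact ⟨h2, Or.inl rfl⟩
        rw [h4, Set.indicator_of_mem h2, Set.indicator_of_notMem h3]
        simp [hadef]
      · have h4 : s ∩ pair = {(↑(ψ+π) : AddCircle (2*π))} := by
          ext x
          constructor
          · rintro ⟨hxs, rfl|hx⟩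
            · exact absurd hxs h2
            · exact hx
          · rintro rfl; exact ⟨h3, Or.inr rfl⟩
        rw [h4, Set.indicator_of_notMem h2, Set.indicator_of_mem h3]
        simp [hbdef]
      · have h4 : s ∩ pair = ∅ := by
          ext x
          simp only [Set.mem_inter_iff, Set.mem_empty_iff_false, iff_false]
          rintro ⟨hxs, rfl|hx⟩
          · exact h2 hxs
          · rw [Set.mem_singleton_iff] at hx; subst hx; exact h3 hxs
        rw [h4, Set.indicator_of_notMem h2, Set.indicator_of_notMem h3]
        simp
    have hatop : a ≠ ⊤ := measure_ne_top ρ _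
    have hbtop : b ≠ ⊤ := measure_ne_top ρ _
    have hsum : a + b = 1 := by
      have h2 := measure_add_measure_compl (μ := ρ) hpairm
      rw [hnull, add_zero, measure_univ] at h2
      rw [← hpairval, h2]
    have hsum' : a.toReal + b.toReal = 1 := by
      have := congrArg ENNReal.toReal hsum
      rwa [ENNReal.toReal_add hatop hbtop, ENNReal.toReal_one] at this
    have hint : ∀ (f : AddCircle (2*π) → ℝ), Continuous f →
        ∫ θ, f θ ∂ρ = a.toReal * f ↑ψ + b.toReal * f ↑(ψ+π) := by
      intro f hf
      haveI h5 : IsFiniteMeasure (a • Measure.dirac (↑ψ : AddCircle (2*π))) :=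
        ⟨by rw [Measure.smul_apply, measure_univ, smul_eq_mul, mul_one]; exact hatop.lt_top⟩
      haveI h6 : IsFiniteMeasure (b • Measure.dirac (↑(ψ+π) : AddCircle (2*π))) :=
        ⟨by rw [Measure.smul_apply, measure_univ, smul_eq_mul, mul_one]; exact hbtop.lt_top⟩
      conv_lhs => rw [hρeq]
      rw [integral_add_measure (kkIntegrable _ hf) (kkIntegrable _ hf),
        integral_smul_measure, integral_smul_measure, integral_dirac, integral_dirac,
        smul_eq_mul, smul_eq_mul]
    have hCval : C = (a.toReal - b.toReal) * Real.cos ψ := by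
      rw [hCdef, hint kkCl kkCl_cont, kkCl_coe, kkCl_coe, Real.cos_add_pi]; ring
    have hSval : S = (a.toReal - b.toReal) * Real.sin ψ := by
      rw [hSdef, hint kkSl kkSl_cont, kkSl_coe, kkSl_coe, Real.sin_add_pi]; ring
    have hab : a.toReal ≠ b.toReal := by
      intro hEq
      exact hCS ⟨by rw [hCval, hEq, sub_self, zero_mul],
                 by rw [hSval, hEq, sub_self, zero_mul]⟩
    have hcoe_add : ∀ x y : ℝ, ((x + y : ℝ) : AddCircle (2*π)) = ↑x + ↑y := fun x y => rfl
    rcases hab.lt_or_gt with hlt|hlt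
    · -- a < b : main atom at ψ + π
      refine ⟨↑(ψ+π), b.toReal, a.toReal, hlt, ENNReal.toReal_nonneg, by linarith, ?_⟩
      have h2 : ((↑(ψ+π) : AddCircle (2*π)) + (π : AddCircle (2*π))) = ↑ψ := by
        rw [← hcoe_add]
        have h3 : ((ψ + π + π - ψ : ℝ) : AddCircle (2*π)) = 0 :=
          (AddCircle.coe_eq_zero_iff _).mpr ⟨1, by rw [zsmul_eq_mul]; push_cast; ring⟩
        rw [QuotientAddGroup.mk_sub, sub_eq_zero] at h3
        exact h3
      rw [h2, ENNReal.ofReal_toReal hbtop, ENNReal.ofReal_toReal hatop, hρeq, add_comm]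
    · -- b < a : main atom at ψ
      refine ⟨↑ψ, a.toReal, b.toReal, hlt, ENNReal.toReal_nonneg, hsum', ?_⟩
      have h2 : ((↑ψ : AddCircle (2*π)) + (π : AddCircle (2*π))) = ↑(ψ+π) := (hcoe_add ψ π).symm
      rw [h2, ENNReal.ofReal_toReal hatop, ENNReal.ofReal_toReal hbtop, hρeq]
  · -- backward direction
    intro hyp
    intro h hCd hper hper'
    rcases hyp with h0 | ⟨φ, c₁, c₂, h12, h2nn, hc, hρeq⟩
    · -- zero order parameter
      rw [hR] at h0
      have hC0 : C = 0 := by simpa using congrArg Complex.re h0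
      have hS0 : S = 0 := by simpa using congrArg Complex.im h0
      have hv0 : ∀ θ, v θ = 0 := by
        intro θ; rw [vform, hC0, hS0]; ring
      simp only [hv0, mul_zero, integral_zero]
    · -- atomic measure
      set pair : Set (AddCircle (2*π)) := {φ, φ + ↑π} with hpairdef
      have hpairm : MeasurableSet pair := (measurableSet_singleton _).insert _
      have hnull : ρ pairᶜ = 0 := by
        rw [hρeq, Measure.add_apply, Measure.smul_apply, Measure.smul_apply,
          Measure.dirac_apply' _ hpairm.compl, Measure.dirac_apply' _ hpairm.compl,
          Set.indicator_of_notMem (by simp [hpairdef]),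
          Set.indicator_of_notMem (by simp [hpairdef])]
        simp
      have hmem : ∀ᵐ θ ∂ρ, θ ∈ pair := by
        rw [ae_iff]
        exact hnull
      have hsl0 : ∀ θ ∈ pair, ∀ θ' ∈ pair, Real.sin_periodic.lift (θ - θ') = 0 := by
        intro θ hθ θ' hθ'
        have hz : Real.sin_periodic.lift ((0 : AddCircle (2*π))) = 0 := by
          rw [show (0 : AddCircle (2*π)) = ((0:ℝ) : AddCircle (2*π)) from rfl,
            Function.Periodic.lift_coe, Real.sin_zero]
        have hp : Real.sin_periodic.lift ((π : ℝ) : AddCircle (2*π)) = 0 := by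
          rw [Function.Periodic.lift_coe, Real.sin_pi]
        have hnp : Real.sin_periodic.lift (-((π : ℝ) : AddCircle (2*π))) = 0 := by
          rw [← QuotientAddGroup.mk_neg, Function.Periodic.lift_coe, Real.sin_neg, Real.sin_pi,
            neg_zero]
        rw [hpairdef, Set.mem_insert_iff, Set.mem_singleton_iff] at hθ hθ'
        rcases hθ with rfl|rfl <;> rcases hθ' with rfl|rfl
        · rw [sub_self]; exact hz
        · rw [show θ - (θ + (π:ℝ)) = -((π : ℝ) : AddCircle (2*π)) by abel]; exact hnp
        · rw [show θ' + (π:ℝ) - θ' = ((π : ℝ) : AddCircle (2*π)) by abel]; exact hp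
        · rw [sub_self]; exact hz
      have hv0 : ∀ θ ∈ pair, v θ = 0 := by
        intro θ hθ
        rw [hv]
        have h2 : ∀ᵐ θ' ∂ρ, Real.sin_periodic.lift (θ - θ') = 0 := by
          filter_upwards [hmem] with θ' hθ'
          exact hsl0 θ hθ θ' hθ'
        rw [integral_eq_zero_of_ae h2, neg_zero]
      have h2 : ∀ᵐ θ ∂ρ, hper'.lift θ * v θ = 0 := by
        filter_upwards [hmem] with θ hθ
        rw [hv0 θ hθ, mul_zero]
      exact integral_eq_zero_of_ae h2
end

section
/- Let Θ be the characteristics of the kinetic Kuramoto model with natural frequencies and coupling K > 0, with initial measure f₀ whose frequency marginal g has compact support. If ∫₀^∞ R(s)² ds < ∞ (boundedness of the entropy), then for every k ∈ ℕ, ∫ e^{iΘ(t,θ,ω)} ω^k df₀(θ,ω) → 0 as t → ∞. -/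
/-!
Write `m_k(t) = ∫ e^{iΘ} ω^k df₀`, so that `m_0 = z`. Since `|∂_t Θ| ≤ M + K` on the support of
`f₀`, every `m_k` is Lipschitz in time, and differentiating along the characteristics gives
`m_k' = i m_{k+1} + r_k` with `|r_k| ≤ K M^k R`. A Lipschitz function that is square integrable on
`[0, ∞)` tends to zero, so `R → 0` and hence `r_k → 0`. Then, by induction on `k`, `m_k → 0`
implies `m_{k+1} → 0` by a Barbalat-type argument: over a short time `h`, `m_k` moves by about
`h · (i m_{k+1} + r_k)`, and `m_{k+1}` is Lipschitz, so it cannot stay large while `m_k` is small.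
Measurability of the integrands comes from continuity of `Θ(t, ·, ·)`, a Grönwall estimate.
-/

open MeasureTheory Filter Set Topology Complex ComplexConjugate

theorem norm_integral_le_of_ae_norm_le {α E : Type*} [MeasurableSpace α] [NormedAddCommGroup E]
    [NormedSpace ℝ E] {μ : Measure α} [IsProbabilityMeasure μ] {f : α → E} {C : ℝ}
    (h : ∀ᵐ x ∂μ, ‖f x‖ ≤ C) : ‖∫ x, f x ∂μ‖ ≤ C := by
  simpa using norm_integral_le_of_norm_le_const h

theorem norm_exp_I_mul_ofReal_sub_exp_le (x y : ℝ) :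
    ‖exp (I * x) - exp (I * y)‖ ≤ |x - y| :=
  calc ‖exp (I * x) - exp (I * y)‖ = ‖exp (I * y) * (exp (I * ↑(x - y)) - 1)‖ := by
        rw [mul_sub, ← Complex.exp_add]; push_cast; ring_nf
    _ = ‖exp (I * ↑(x - y)) - 1‖ := by rw [norm_mul, norm_exp_I_mul_ofReal, one_mul]
    _ ≤ |x - y| := Real.norm_exp_I_mul_ofReal_sub_one_le

theorem ae_abs_snd_le_of_map_snd {α : Type*} [MeasurableSpace α] {μ : Measure (α × ℝ)} {M : ℝ}
    (h : μ.map Prod.snd (Icc (-M) M)ᶜ = 0) : ∀ᵐ p ∂μ, |p.2| ≤ M :=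
  (ae_of_ae_map measurable_snd.aemeasurable (ae_iff.2 h)).mono fun _ hp => abs_le.2 hp

section Barbalat

variable {E : Type*} [NormedAddCommGroup E] [NormedSpace ℝ E] {f g r : ℝ → E} {a L : ℝ}

theorem norm_sub_sub_smul_le_of_hasDerivAt_add (hL : 0 ≤ L)
    (hderiv : ∀ t ≥ a, HasDerivAt f (g t + r t) t)
    (hg : ∀ t ≥ a, ∀ s ≥ a, ‖g t - g s‖ ≤ L * |t - s|)
    {t h C : ℝ} (ht : a ≤ t) (hh : 0 ≤ h) (hr : ∀ s ∈ Icc t (t + h), ‖r s‖ ≤ C) :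
    ‖f (t + h) - f t - h • g t‖ ≤ (L * h + C) * h := by
  have hφ : ∀ s ∈ Icc t (t + h),
      HasDerivWithinAt (fun s => f s - s • g t) (g s + r s - g t) (Icc t (t + h)) s := by
    intro s hs
    have := (hderiv s (ht.trans hs.1)).fun_sub ((hasDerivAt_id' s).smul_const (g t))
    simpa using this.hasDerivWithinAt
  have hbound : ∀ s ∈ Icc t (t + h), ‖g s + r s - g t‖ ≤ L * h + C := by
    intro s hs
    have hdist : |s - t| ≤ h := abs_le.2 ⟨by linarith [hs.1], by linarith [hs.2]⟩
    calc ‖g s + r s - g t‖ ≤ ‖g s - g t‖ + ‖r s‖ := by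
          rw [add_sub_right_comm]; exact norm_add_le _ _
      _ ≤ L * h + C := by
          gcongr
          · exact (hg s (ht.trans hs.1) t ht).trans (by gcongr)
          · exact hr s hs
  have := (convex_Icc t (t + h)).norm_image_sub_le_of_norm_hasDerivWithin_le hφ hbound
    (left_mem_Icc.2 (by linarith)) (right_mem_Icc.2 (by linarith))
  convert this using 2
  · rw [add_smul]; abel
  · simp [abs_of_nonneg hh]

theorem tendsto_zero_of_hasDerivAt_add (hL : 0 ≤ L)
    (hderiv : ∀ t ≥ a, HasDerivAt f (g t + r t) t)
    (hg : ∀ t ≥ a, ∀ s ≥ a, ‖g t - g s‖ ≤ L * |t - s|)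
    (hf : Tendsto f atTop (𝓝 0)) (hr : Tendsto r atTop (𝓝 0)) :
    Tendsto g atTop (𝓝 0) := by
  refine tendsto_zero_iff_norm_tendsto_zero.2 <| tendsto_order.2 ⟨fun ε hε => ?_, fun ε hε => ?_⟩
  · exact Eventually.of_forall fun t => hε.trans_le (norm_nonneg _)
  set h := ε / (8 * (L + 1)) with h_def
  have hh : 0 < h := by positivity
  have hLh : L * h ≤ ε / 8 := by
    rw [h_def, ← mul_div_assoc, div_le_div_iff₀ (by positivity) (by positivity)]
    nlinarith
  have hf_small : ∀ᶠ t in atTop, ‖f t‖ ≤ ε * h / 8 :=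
    (tendsto_zero_iff_norm_tendsto_zero.1 hf).eventually (eventually_le_nhds (by positivity))
  obtain ⟨N, hN⟩ := eventually_atTop.1 <|
    (tendsto_zero_iff_norm_tendsto_zero.1 hr).eventually
      (eventually_le_nhds (by positivity : 0 < ε / 8))
  filter_upwards [hf_small, (tendsto_atTop_add_const_right atTop h tendsto_id).eventually hf_small,
    eventually_ge_atTop a, eventually_ge_atTop N] with t hft (hfth : ‖f (t + h)‖ ≤ _) hat hNt
  have htaylor := norm_sub_sub_smul_le_of_hasDerivAt_add hL hderiv hg hat hh.le
    (fun s hs => hN s (hNt.trans hs.1))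
  have : h * ‖g t‖ ≤ h * (ε / 2) := by
    calc h * ‖g t‖ = ‖h • g t‖ := by rw [norm_smul, Real.norm_of_nonneg hh.le]
      _ ≤ ‖f (t + h) - f t - h • g t‖ + ‖f (t + h)‖ + ‖f t‖ := by
          have := norm_sub_le (f (t + h) - f t - h • g t) (f (t + h) - f t)
          have := norm_sub_le (f (t + h)) (f t)
          rw [sub_sub_cancel_left, norm_neg] at *
          linarith
      _ ≤ (L * h + ε / 8) * h + ε * h / 8 + ε * h / 8 := by gcongr
      _ ≤ h * (ε / 2) := by nlinarith [mul_le_mul_of_nonneg_right hLh hh.le]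
  linarith [le_of_mul_le_mul_left this hh]

end Barbalat

theorem tendsto_zero_of_integrableOn_norm_sq {E : Type*} [NormedAddCommGroup E] {g : ℝ → E}
    {a L : ℝ} (hL : 0 ≤ L) (hg : ∀ t ≥ a, ∀ s ≥ a, ‖g t - g s‖ ≤ L * |t - s|)
    (hint : IntegrableOn (fun s => ‖g s‖ ^ 2) (Ici a)) :
    Tendsto g atTop (𝓝 0) := by
  refine tendsto_zero_iff_norm_tendsto_zero.2 <| tendsto_order.2 ⟨fun ε hε => ?_, fun ε hε => ?_⟩
  · exact Eventually.of_forall fun t => hε.trans_le (norm_nonneg _)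
  set δ := ε / (2 * (L + 1)) with δ_def
  have hδ : 0 < δ := by positivity
  have hLδ : L * δ ≤ ε / 2 := by
    rw [δ_def, ← mul_div_assoc, div_le_div_iff₀ (by positivity) (by positivity)]
    nlinarith
  have hii : ∀ t ≥ a, ∀ u ≥ a, IntervalIntegrable (fun s => ‖g s‖ ^ 2) volume t u :=
    fun t ht u hu => (hint.mono_set fun _ hx => (le_min ht hu).trans hx.1).intervalIntegrable
  have htail : Tendsto (fun t => ∫ s in t..t + δ, ‖g s‖ ^ 2) atTop (𝓝 0) := by
    have hΦ :=
      intervalIntegral_tendsto_integral_Ioi a (hint.mono_set Ioi_subset_Ici_self) tendsto_id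
    have := (hΦ.comp (tendsto_atTop_add_const_right atTop δ tendsto_id)).sub hΦ
    rw [sub_self] at this
    refine this.congr' ?_
    filter_upwards [eventually_ge_atTop a] with t ht
    simp only [Function.comp_apply, id]
    exact intervalIntegral.integral_interval_sub_left (hii a le_rfl _ (by linarith))
      (hii a le_rfl t ht)
  filter_upwards [htail.eventually (eventually_lt_nhds (by positivity : 0 < (ε / 2) ^ 2 * δ)),
    eventually_ge_atTop a] with t hsmall ht
  by_contra! hgt
  refine hsmall.not_ge ?_
  calc (ε / 2) ^ 2 * δ = ∫ _ in t..t + δ, (ε / 2) ^ 2 := by simp [mul_comm]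
    _ ≤ ∫ s in t..t + δ, ‖g s‖ ^ 2 := by
      refine intervalIntegral.integral_mono_on (by linarith) (by simp) (hii t ht _ (by linarith))
        fun s hs => ?_
      have hts : ‖g t - g s‖ ≤ ε / 2 := by
        calc ‖g t - g s‖ ≤ L * |t - s| := hg t ht s (ht.trans hs.1)
          _ ≤ L * δ := by gcongr; exact abs_sub_le_iff.2 ⟨by linarith [hs.1], by linarith [hs.2]⟩
          _ ≤ ε / 2 := hLδ
      have : ε / 2 ≤ ‖g s‖ := by linarith [norm_sub_norm_le (g t) (g s)]
      gcongr

noncomputable def kuramotoVelocity (K : ℝ) (z : ℂ) (θ ω : ℝ) : ℝ :=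
  ω - K * (exp (I * θ) * conj z).im

theorem abs_kuramotoVelocity_sub_le {K : ℝ} (hK : 0 ≤ K) (z z' : ℂ) (θ θ' ω ω' : ℝ) :
    |kuramotoVelocity K z θ ω - kuramotoVelocity K z' θ' ω'|
      ≤ |ω - ω'| + K * (‖z‖ * |θ - θ'| + ‖z - z'‖) := by
  have hdiff : exp (I * θ) * conj z - exp (I * θ') * conj z'
      = (exp (I * θ) - exp (I * θ')) * conj z + exp (I * θ') * conj (z - z') := by
    rw [map_sub]; ring
  have hnorm : ‖exp (I * θ) * conj z - exp (I * θ') * conj z'‖ ≤ ‖z‖ * |θ - θ'| + ‖z - z'‖ := by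
    rw [hdiff]
    refine (norm_add_le _ _).trans ?_
    rw [norm_mul, norm_mul, RCLike.norm_conj, RCLike.norm_conj, norm_exp_I_mul_ofReal, one_mul,
      mul_comm]
    gcongr
    exact norm_exp_I_mul_ofReal_sub_exp_le θ θ'
  calc |kuramotoVelocity K z θ ω - kuramotoVelocity K z' θ' ω'|
      = |(ω - ω') - K * (exp (I * θ) * conj z - exp (I * θ') * conj z').im| := by
        rw [kuramotoVelocity, kuramotoVelocity, sub_im]; ring_nf
    _ ≤ |ω - ω'| + K * ‖exp (I * θ) * conj z - exp (I * θ') * conj z'‖ := by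
        refine (abs_sub _ _).trans ?_
        rw [abs_mul, abs_of_nonneg hK]
        gcongr
        exact abs_im_le_norm _
    _ ≤ |ω - ω'| + K * (‖z‖ * |θ - θ'| + ‖z - z'‖) := by gcongr

theorem abs_kuramotoVelocity_le {K : ℝ} (hK : 0 ≤ K) (z : ℂ) (θ ω : ℝ) :
    |kuramotoVelocity K z θ ω| ≤ |ω| + K * ‖z‖ := by
  simpa [kuramotoVelocity] using abs_kuramotoVelocity_sub_le hK z 0 θ θ ω 0

theorem abs_kuramotoVelocity_sub_freq_le {K : ℝ} (hK : 0 ≤ K) (z : ℂ) (θ ω : ℝ) :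
    |kuramotoVelocity K z θ ω - ω| ≤ K * ‖z‖ := by
  simpa [kuramotoVelocity] using abs_kuramotoVelocity_sub_le hK z 0 θ θ ω ω

structure KuramotoCharacteristics (K : ℝ) (f₀ : Measure (ℝ × ℝ)) (Θ : ℝ → ℝ → ℝ → ℝ)
    (z : ℝ → ℂ) : Prop where
  orderParameter_eq : ∀ t, z t = ∫ p : ℝ × ℝ, exp (I * Θ t p.1 p.2) ∂f₀
  initial : ∀ θ ω, Θ 0 θ ω = θ
  hasDerivAt : ∀ θ ω, ∀ t ≥ (0 : ℝ),
    HasDerivAt (fun s => Θ s θ ω) (kuramotoVelocity K (z t) (Θ t θ ω) ω) t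

noncomputable def kuramotoMoment (f₀ : Measure (ℝ × ℝ)) (Θ : ℝ → ℝ → ℝ → ℝ) (k : ℕ) (t : ℝ) : ℂ :=
  ∫ p : ℝ × ℝ, exp (I * Θ t p.1 p.2) * (p.2 : ℂ) ^ k ∂f₀

noncomputable def kuramotoMomentDeriv (K : ℝ) (f₀ : Measure (ℝ × ℝ)) (Θ : ℝ → ℝ → ℝ → ℝ)
    (z : ℝ → ℂ) (k : ℕ) (t : ℝ) : ℂ :=
  ∫ p : ℝ × ℝ, exp (I * Θ t p.1 p.2) * (I * kuramotoVelocity K (z t) (Θ t p.1 p.2) p.2)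
    * (p.2 : ℂ) ^ k ∂f₀

namespace KuramotoCharacteristics

variable {K M : ℝ} {f₀ : Measure (ℝ × ℝ)} {Θ : ℝ → ℝ → ℝ → ℝ} {z : ℝ → ℂ}

theorem kuramotoMoment_zero (h : KuramotoCharacteristics K f₀ Θ z) :
    kuramotoMoment f₀ Θ 0 = z := by
  ext t
  simp [h.orderParameter_eq t, kuramotoMoment]

variable [IsProbabilityMeasure f₀]

theorem norm_le_one (h : KuramotoCharacteristics K f₀ Θ z) (t : ℝ) :
    ‖z t‖ ≤ 1 := by
  rw [h.orderParameter_eq t]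
  exact norm_integral_le_of_ae_norm_le (ae_of_all _ fun p => (norm_exp_I_mul_ofReal _).le)

theorem abs_velocity_le (hK : 0 ≤ K)
    (h : KuramotoCharacteristics K f₀ Θ z) {ω : ℝ} (hω : |ω| ≤ M) (t θ : ℝ) :
    |kuramotoVelocity K (z t) θ ω| ≤ M + K :=
  calc _ ≤ |ω| + K * ‖z t‖ := abs_kuramotoVelocity_le hK _ _ _
    _ ≤ M + K * 1 := by gcongr; exact h.norm_le_one t
    _ = M + K := by ring

theorem abs_sub_le_of_abs_freq_le (hK : 0 ≤ K)
    (h : KuramotoCharacteristics K f₀ Θ z) {θ ω : ℝ} (hω : |ω| ≤ M) {t s : ℝ} (ht : 0 ≤ t)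
    (hs : 0 ≤ s) : |Θ t θ ω - Θ s θ ω| ≤ (M + K) * |t - s| := by
  simpa using (convex_Ici 0).norm_image_sub_le_of_norm_hasDerivWithin_le
    (fun u hu => (h.hasDerivAt θ ω u hu).hasDerivWithinAt)
    (fun u _ => h.abs_velocity_le hK hω u _) hs ht

theorem abs_sub_le_gronwallBound (hK : 0 ≤ K)
    (h : KuramotoCharacteristics K f₀ Θ z) {t : ℝ} (ht : 0 ≤ t) (p q : ℝ × ℝ) :
    |Θ t p.1 p.2 - Θ t q.1 q.2| ≤ gronwallBound |p.1 - q.1| K |p.2 - q.2| t := by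
  have hderiv : ∀ s ≥ (0 : ℝ), HasDerivAt (fun s => Θ s p.1 p.2 - Θ s q.1 q.2)
      (kuramotoVelocity K (z s) (Θ s p.1 p.2) p.2 - kuramotoVelocity K (z s) (Θ s q.1 q.2) q.2) s :=
    fun s hs => (h.hasDerivAt _ _ s hs).sub (h.hasDerivAt _ _ s hs)
  simpa using norm_le_gronwallBound_of_norm_deriv_right_le
    (fun s hs => (hderiv s hs.1).continuousAt.continuousWithinAt)
    (fun s hs => (hderiv s hs.1).hasDerivWithinAt)
    (by simp [h.initial])
    (fun s hs => by
      rw [Real.norm_eq_abs, Real.norm_eq_abs]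
      calc _ ≤ |p.2 - q.2| + K * (‖z s‖ * |Θ s p.1 p.2 - Θ s q.1 q.2| + ‖z s - z s‖) :=
            abs_kuramotoVelocity_sub_le hK _ _ _ _ _ _
        _ ≤ |p.2 - q.2| + K * (1 * |Θ s p.1 p.2 - Θ s q.1 q.2| + 0) := by
            rw [sub_self, norm_zero]; gcongr; exact h.norm_le_one s
        _ = K * |Θ s p.1 p.2 - Θ s q.1 q.2| + |p.2 - q.2| := by ring)
    t ⟨ht, le_rfl⟩

theorem continuous_phase (hK : 0 ≤ K) (h : KuramotoCharacteristics K f₀ Θ z)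
    {t : ℝ} (ht : 0 ≤ t) : Continuous fun p : ℝ × ℝ => Θ t p.1 p.2 := by
  refine continuous_iff_continuousAt.2 fun q => tendsto_iff_norm_sub_tendsto_zero.2 ?_
  have hbound : Continuous fun p : ℝ × ℝ => gronwallBound |p.1 - q.1| K |p.2 - q.2| t := by
    unfold gronwallBound; split_ifs <;> fun_prop
  refine squeeze_zero (fun _ => norm_nonneg _) (fun p => h.abs_sub_le_gronwallBound hK ht p q) ?_
  simpa [gronwallBound_ε0_δ0] using hbound.tendsto q

theorem norm_exp_mul_velocity_mul_pow_le (hK : 0 ≤ K)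
    (h : KuramotoCharacteristics K f₀ Θ z) {ω : ℝ} (hω : |ω| ≤ M) (t θ : ℝ) (k : ℕ) :
    ‖exp (I * θ) * (I * kuramotoVelocity K (z t) θ ω) * (ω : ℂ) ^ k‖ ≤ (M + K) * M ^ k := by
  rw [norm_mul, norm_mul, norm_exp_I_mul_ofReal, one_mul, norm_mul, norm_I, one_mul, norm_real,
    Real.norm_eq_abs, norm_pow, norm_real, Real.norm_eq_abs]
  have hv := h.abs_velocity_le hK hω t θ
  exact mul_le_mul hv (by gcongr) (by positivity) ((abs_nonneg _).trans hv)

theorem integrable_moment (hK : 0 ≤ K) (h : KuramotoCharacteristics K f₀ Θ z)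
    (hM : ∀ᵐ p ∂f₀, |p.2| ≤ M) {t : ℝ} (ht : 0 ≤ t) (k : ℕ) :
    Integrable (fun p : ℝ × ℝ => exp (I * Θ t p.1 p.2) * (p.2 : ℂ) ^ k) f₀ := by
  have hΘ := h.continuous_phase hK ht
  refine .of_bound (by fun_prop) (M ^ k) (hM.mono fun p hp => ?_)
  rw [norm_mul, norm_exp_I_mul_ofReal, one_mul, norm_pow, norm_real, Real.norm_eq_abs]
  gcongr

theorem integrable_momentDeriv (hK : 0 ≤ K) (h : KuramotoCharacteristics K f₀ Θ z)
    (hM : ∀ᵐ p ∂f₀, |p.2| ≤ M) {t : ℝ} (ht : 0 ≤ t) (k : ℕ) :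
    Integrable (fun p : ℝ × ℝ => exp (I * Θ t p.1 p.2)
      * (I * kuramotoVelocity K (z t) (Θ t p.1 p.2) p.2) * (p.2 : ℂ) ^ k) f₀ := by
  have hΘ := h.continuous_phase hK ht
  exact .of_bound (by unfold kuramotoVelocity; fun_prop) ((M + K) * M ^ k)
    (hM.mono fun p hp => h.norm_exp_mul_velocity_mul_pow_le hK hp t _ k)

theorem norm_kuramotoMoment_sub_le (hK : 0 ≤ K) (h : KuramotoCharacteristics K f₀ Θ z)
    (hM : ∀ᵐ p ∂f₀, |p.2| ≤ M) (k : ℕ) {t s : ℝ} (ht : 0 ≤ t) (hs : 0 ≤ s) :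
    ‖kuramotoMoment f₀ Θ k t - kuramotoMoment f₀ Θ k s‖ ≤ (M + K) * M ^ k * |t - s| := by
  rw [kuramotoMoment, kuramotoMoment,
    ← integral_sub (h.integrable_moment hK hM ht k) (h.integrable_moment hK hM hs k)]
  refine norm_integral_le_of_ae_norm_le (hM.mono fun p hp => ?_)
  rw [← sub_mul, norm_mul, norm_pow, norm_real, Real.norm_eq_abs]
  have hexp := (norm_exp_I_mul_ofReal_sub_exp_le _ _).trans
    (h.abs_sub_le_of_abs_freq_le (θ := p.1) hK hp ht hs)
  calc _ ≤ (M + K) * |t - s| * M ^ k :=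
        mul_le_mul hexp (by gcongr) (by positivity) ((norm_nonneg _).trans hexp)
    _ = (M + K) * M ^ k * |t - s| := by ring

theorem hasDerivAt_kuramotoMoment (hK : 0 ≤ K) (h : KuramotoCharacteristics K f₀ Θ z)
    (hM : ∀ᵐ p ∂f₀, |p.2| ≤ M) (k : ℕ) {t : ℝ} (ht : 0 < t) :
    HasDerivAt (kuramotoMoment f₀ Θ k) (kuramotoMomentDeriv K f₀ Θ z k t) t := by
  refine (hasDerivAt_integral_of_dominated_loc_of_deriv_le (𝕜 := ℝ) (μ := f₀)
    (bound := fun _ => (M + K) * M ^ k)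
    (F := fun u p => exp (I * Θ u p.1 p.2) * (p.2 : ℂ) ^ k)
    (F' := fun u p => exp (I * Θ u p.1 p.2) * (I * kuramotoVelocity K (z u) (Θ u p.1 p.2) p.2)
      * (p.2 : ℂ) ^ k)
    (Ioi_mem_nhds ht) ?_ (h.integrable_moment hK hM ht.le k)
    (h.integrable_momentDeriv hK hM ht.le k).aestronglyMeasurable ?_ (integrable_const _) ?_).2
  · filter_upwards [Ioi_mem_nhds ht] with u hu
    exact (h.integrable_moment hK hM (le_of_lt hu) k).aestronglyMeasurable
  · filter_upwards [hM] with p hp u _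
    exact h.norm_exp_mul_velocity_mul_pow_le hK hp u _ k
  · refine ae_of_all _ fun p u hu => ?_
    exact (((h.hasDerivAt p.1 p.2 u (le_of_lt hu)).ofReal_comp.const_mul I).cexp).mul_const _

theorem norm_kuramotoMomentDeriv_sub_le (hK : 0 ≤ K) (h : KuramotoCharacteristics K f₀ Θ z)
    (hM : ∀ᵐ p ∂f₀, |p.2| ≤ M) (k : ℕ) {t : ℝ} (ht : 0 ≤ t) :
    ‖kuramotoMomentDeriv K f₀ Θ z k t - I * kuramotoMoment f₀ Θ (k + 1) t‖ ≤ K * M ^ k * ‖z t‖ := by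
  rw [kuramotoMomentDeriv, kuramotoMoment, ← integral_const_mul,
    ← integral_sub (h.integrable_momentDeriv hK hM ht k)
      ((h.integrable_moment hK hM ht _).const_mul _)]
  refine norm_integral_le_of_ae_norm_le (hM.mono fun p hp => ?_)
  have hsplit : exp (I * Θ t p.1 p.2) * (I * kuramotoVelocity K (z t) (Θ t p.1 p.2) p.2)
        * (p.2 : ℂ) ^ k - I * (exp (I * Θ t p.1 p.2) * (p.2 : ℂ) ^ (k + 1))
      = I * exp (I * Θ t p.1 p.2) * ↑(kuramotoVelocity K (z t) (Θ t p.1 p.2) p.2 - p.2)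
        * (p.2 : ℂ) ^ k := by
    push_cast; ring
  rw [hsplit, norm_mul, norm_mul, norm_mul, norm_I, one_mul, norm_exp_I_mul_ofReal, one_mul,
    norm_real, Real.norm_eq_abs, norm_pow, norm_real, Real.norm_eq_abs]
  calc _ ≤ K * ‖z t‖ * M ^ k := by
        gcongr
        exact abs_kuramotoVelocity_sub_freq_le hK _ _ _
    _ = K * M ^ k * ‖z t‖ := by ring

theorem tendsto_orderParameter (hK : 0 ≤ K) (h : KuramotoCharacteristics K f₀ Θ z)
    (hM : ∀ᵐ p ∂f₀, |p.2| ≤ M) (hz : IntegrableOn (fun s => ‖z s‖ ^ 2) (Ici 0)) :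
    Tendsto z atTop (𝓝 0) := by
  have hM₀ : 0 ≤ M := let ⟨p, hp⟩ := hM.exists; (abs_nonneg _).trans hp
  refine tendsto_zero_of_integrableOn_norm_sq (L := M + K) (by positivity) (fun t ht s hs => ?_) hz
  have := h.norm_kuramotoMoment_sub_le hK hM 0 ht hs
  rwa [h.kuramotoMoment_zero, pow_zero, mul_one] at this

theorem tendsto_kuramotoMoment (hK : 0 ≤ K) (h : KuramotoCharacteristics K f₀ Θ z)
    (hM : ∀ᵐ p ∂f₀, |p.2| ≤ M) (hz : IntegrableOn (fun s => ‖z s‖ ^ 2) (Ici 0)) (k : ℕ) :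
    Tendsto (kuramotoMoment f₀ Θ k) atTop (𝓝 0) := by
  have hM₀ : 0 ≤ M := let ⟨p, hp⟩ := hM.exists; (abs_nonneg _).trans hp
  have hz₀ := h.tendsto_orderParameter hK hM hz
  induction k with
  | zero => rwa [h.kuramotoMoment_zero]
  | succ k ih =>
    have hr : Tendsto
        (fun t => kuramotoMomentDeriv K f₀ Θ z k t - I * kuramotoMoment f₀ Θ (k + 1) t)
        atTop (𝓝 0) := by
      refine squeeze_zero_norm' ?_ (by simpa using hz₀.norm.const_mul (K * M ^ k))
      filter_upwards [eventually_ge_atTop 0] with t ht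
      exact h.norm_kuramotoMomentDeriv_sub_le hK hM k ht
    have hI : Tendsto (fun t => I * kuramotoMoment f₀ Θ (k + 1) t) atTop (𝓝 0) := by
      refine tendsto_zero_of_hasDerivAt_add (a := 1) (L := (M + K) * M ^ (k + 1))
        (by positivity) (fun t ht => ?_) (fun t ht s hs => ?_) ih hr
      · rw [add_sub_cancel]
        exact h.hasDerivAt_kuramotoMoment hK hM k (by linarith)
      · rw [← mul_sub, norm_mul, norm_I, one_mul]
        exact h.norm_kuramotoMoment_sub_le hK hM _ (by linarith) (by linarith)
    simpa [← mul_assoc] using hI.const_mul (-I)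

end KuramotoCharacteristics

/-- For the kinetic Kuramoto model with natural frequencies and coupling `K > 0`, whose
frequency marginal has compact support: if `∫₀^∞ R(s)² ds < ∞` (boundedness of the
entropy), then for every `k ∈ ℕ`, `∫ e^{iΘ(t,θ,ω)} ω^k df₀(θ,ω) → 0` as `t → ∞`. -/
theorem kinetic_kuramoto_fourier_moments_vanish
    (K : ℝ) (hK : 0 < K)
    (f₀ : Measure (ℝ × ℝ)) [IsProbabilityMeasure f₀]
    (Θ : ℝ → ℝ → ℝ → ℝ) (z : ℝ → ℂ)
    (hz : ∀ t, z t = ∫ p : ℝ × ℝ, Complex.exp (Complex.I * (Θ t p.1 p.2 : ℂ)) ∂f₀)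
    (hinit : ∀ θ ω, Θ 0 θ ω = θ)
    (hode : ∀ (θ ω : ℝ), ∀ t ≥ (0:ℝ),
      HasDerivAt (fun s => Θ s θ ω)
        (ω - K * (Complex.exp (Complex.I * (Θ t θ ω : ℂ)) * (starRingEnd ℂ) (z t)).im) t)
    (M : ℝ) (hsupp : (Measure.map Prod.snd f₀) (Set.Icc (-M) M)ᶜ = 0)
    (hentropy : IntegrableOn (fun s => ‖z s‖ ^ 2) (Set.Ici (0:ℝ))) :
    ∀ k : ℕ,
      Tendsto (fun t =>
          ∫ p : ℝ × ℝ, Complex.exp (Complex.I * (Θ t p.1 p.2 : ℂ)) * (p.2 : ℂ) ^ k ∂f₀)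
        atTop (nhds 0) :=
  (KuramotoCharacteristics.mk hz hinit hode).tendsto_kuramotoMoment hK.le
    (ae_abs_snd_le_of_map_snd hsupp) hentropy
end

section
/- Let f̄ be a Borel probability measure on ℝ × ℝ (phase θ, frequency ω) whose frequency marginal has compact support. If ∫ e^{iθ} ω^k df̄(θ,ω) = 0 for every k ∈ ℕ, then ∫ e^{i(θ + ωt)} df̄(θ,ω) = 0 for every t ∈ ℝ; i.e. the free flow (the solution of the Kuramoto equation with this density as initial datum) has order parameter R(t) = 0 for all times, so f̄ evolves as an incoherent state. -/
open MeasureTheory Filter Real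

/-! Expanding `e^{iωt}` in its power series turns `∫ e^{i(θ+ωt)} df̄` into
`∑ₖ (it)ᵏ/k! ∫ e^{iθ} ωᵏ df̄`. Since `|ω| ≤ M` almost everywhere, the terms are dominated by
`(|t|M)ᵏ/k!`, so the series may be integrated term by term, and every term is a vanishing
moment. -/

theorem hasSum_integral_mul_cexp {X : Type*} [MeasurableSpace X] {μ : Measure X} {g φ : X → ℂ}
    {C : ℝ} (hg : Integrable g μ) (hφ : AEStronglyMeasurable φ μ) (hφ_bound : ∀ᵐ x ∂μ, ‖φ x‖ ≤ C) :
    HasSum (fun k : ℕ => (∫ x, g x * φ x ^ k ∂μ) / k.factorial)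
      (∫ x, g x * Complex.exp (φ x) ∂μ) := by
  simp_rw [← integral_div]
  refine hasSum_integral_of_dominated_convergence (fun k x => ‖g x‖ * (C ^ k / k.factorial))
    (fun k => by have := hg.aestronglyMeasurable; fun_prop) (fun k => ?_)
    (ae_of_all _ fun x => (Real.summable_pow_div_factorial C).mul_left _) ?_
    (ae_of_all _ fun x => ?_)
  · filter_upwards [hφ_bound] with x hx
    rw [norm_div, norm_mul, norm_pow, Complex.norm_natCast, mul_div_assoc]
    gcongr
  · simp_rw [tsum_mul_left]
    exact hg.norm.mul_const _
  · simp_rw [mul_div_assoc]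
    rw [Complex.exp_eq_exp_ℂ]
    exact (NormedSpace.expSeries_div_hasSum_exp (φ x)).mul_left (g x)

theorem integral_mul_cexp_eq_zero_of_moments_eq_zero {X : Type*} [MeasurableSpace X]
    {μ : Measure X} {g φ : X → ℂ} {C : ℝ} (hg : Integrable g μ) (hφ : AEStronglyMeasurable φ μ)
    (hφ_bound : ∀ᵐ x ∂μ, ‖φ x‖ ≤ C) (hmom : ∀ k : ℕ, ∫ x, g x * φ x ^ k ∂μ = 0) :
    ∫ x, g x * Complex.exp (φ x) ∂μ = 0 := by
  have hsum := hasSum_integral_mul_cexp hg hφ hφ_bound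
  simp only [hmom, zero_div] at hsum
  exact hsum.unique hasSum_zero

theorem ae_abs_le_of_map_compl_Icc_eq_zero {X : Type*} [MeasurableSpace X] {μ : Measure X}
    {f : X → ℝ} (hf : AEMeasurable f μ) {M : ℝ} (hM : μ.map f (Set.Icc (-M) M)ᶜ = 0) :
    ∀ᵐ x ∂μ, |f x| ≤ M :=
  (ae_of_ae_map hf (mem_ae_iff.mpr hM)).mono fun _ hx => abs_le.mpr hx

/-- Let `f̄` be a Borel probability measure on phase–frequency space `ℝ × ℝ` whose
frequency marginal has compact support. If `∫ e^{iθ} ω^k df̄ = 0` for every `k ∈ ℕ`,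
then `∫ e^{i(θ+ωt)} df̄ = 0` for every `t`: the free flow of `f̄` has order parameter
`R(t) = 0` for all times, i.e. `f̄` evolves as an incoherent state. -/
theorem free_flow_incoherent_of_vanishing_moments
    (fbar : Measure (ℝ × ℝ)) [IsProbabilityMeasure fbar]
    (M : ℝ) (hsupp : (Measure.map Prod.snd fbar) (Set.Icc (-M) M)ᶜ = 0)
    (hmom : ∀ k : ℕ,
      ∫ p : ℝ × ℝ, Complex.exp (Complex.I * (p.1 : ℂ)) * (p.2 : ℂ) ^ k ∂fbar = 0) :
    ∀ t : ℝ,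
      ∫ p : ℝ × ℝ, Complex.exp (Complex.I * ((p.1 + p.2 * t : ℝ) : ℂ)) ∂fbar = 0 := by
  intro t
  have hfreq := ae_abs_le_of_map_compl_Icc_eq_zero measurable_snd.aemeasurable hsupp
  have hphase : Integrable (fun p : ℝ × ℝ => Complex.exp (Complex.I * p.1)) fbar :=
    (integrable_const (1 : ℝ)).mono' (by fun_prop) (ae_of_all _ fun p => by
      simp [Complex.norm_exp])
  have hsplit : ∀ p : ℝ × ℝ, Complex.exp (Complex.I * ((p.1 + p.2 * t : ℝ) : ℂ))
      = Complex.exp (Complex.I * p.1) * Complex.exp (Complex.I * t * p.2) := fun p => by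
    rw [← Complex.exp_add]; push_cast; ring_nf
  simp_rw [hsplit]
  refine integral_mul_cexp_eq_zero_of_moments_eq_zero hphase (by fun_prop) (C := |t| * M)
    (hfreq.mono fun p hp => ?_) fun k => ?_
  · simp only [norm_mul, Complex.norm_I, Complex.norm_real, Real.norm_eq_abs, one_mul]
    exact mul_le_mul_of_nonneg_left hp (abs_nonneg t)
  · simp_rw [mul_pow (Complex.I * t), mul_left_comm _ ((Complex.I * t) ^ k), integral_const_mul,
      hmom, mul_zero]
end
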